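/- arXiv:2510.12431 — 8 statements merged into one kernel-verified Lean document; each statement's English description precedes it below -/
import Mathlib

section
/- For every real q with 0 < q < 1 and every real t, the infinite product ∏_{m=1}^∞ (1−q^m)^2 / ((1−q^m)^2 + t^2 q^m) converges, the series ∑_{m=1}^∞ (−1)^{m−1} q^{m(m−1)/2} (1+q^m) (1−q^m)^2/((1−q^m)^2 + t^2 q^m) converges, and the two are equal. -/
/-!
Write `x = q^m` and `u = 2 - t²`. Since `(1 - x)² + t²x = x (v - u)` with `v = x + x⁻¹`, the
`m`-th factor of the product is `(1 - x)² / (x (v_m - u))`, and the nodes `v_1, …, v_N` are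
distinct. Multiplying the partial product over `m ≤ N` by the Lagrange identity
`∑_j ∏_{i ≠ j} (u - v_i) / (v_j - v_i) = 1` leaves `u` only in the `j`-th factor of the `j`-th
summand; the remaining `u`-free factors multiply out to q-Pochhammer symbols, giving the exact
identity (terms indexed from `0`)
`∏_{m ≤ N} = ∑_{j < N} (series term j) · (q^(N-j); q)_{j+1} / (q^(N+1); q)_{j+1}`.
These correction ratios tend to `1` and, for large `N`, are at most `2` uniformly in `j`, while the
series terms are `O(q^j)`; Tannery's theorem then lets `N → ∞`.
-/

open Finset Filter Topology

theorem Lagrange.sum_prod_erase_div_eq_one {F ι : Type*} [Field F] [DecidableEq ι]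
    {s : Finset ι} {v : ι → F} (hvs : Set.InjOn v s) (hs : s.Nonempty) (x : F) :
    ∑ j ∈ s, ∏ i ∈ s.erase j, (x - v i) / (v j - v i) = 1 := by
  simpa [Lagrange.basis, Lagrange.basisDivisor, Polynomial.eval_finsetSum,
    Polynomial.eval_prod, div_eq_inv_mul] using
    congrArg (Polynomial.eval x) (Lagrange.sum_basis hvs hs)

theorem Finset.one_sub_sum_le_prod_one_sub {ι R : Type*} [CommRing R] [LinearOrder R]
    [IsStrictOrderedRing R] (s : Finset ι) {f : ι → R} (h0 : ∀ i ∈ s, 0 ≤ f i)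
    (h1 : ∀ i ∈ s, f i ≤ 1) :
    1 - ∑ i ∈ s, f i ≤ ∏ i ∈ s, (1 - f i) := by
  induction s using Finset.cons_induction with
  | empty => simp
  | cons a s ha ih =>
    rw [prod_cons, sum_cons]
    have ih := ih (fun i hi => h0 i (mem_cons_of_mem hi)) (fun i hi => h1 i (mem_cons_of_mem hi))
    have ha0 := h0 a (mem_cons_self a s)
    have ha1 := h1 a (mem_cons_self a s)
    have hs : 0 ≤ ∑ i ∈ s, f i := sum_nonneg fun i hi => h0 i (mem_cons_of_mem hi)
    nlinarith [mul_le_mul_of_nonneg_left ih (sub_nonneg.mpr ha1), mul_nonneg ha0 hs]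

theorem Finset.prod_range_pow_sub {M : Type*} [CommMonoid M] (q : M) (j : ℕ) :
    ∏ i ∈ range j, q ^ (j - i) = q ^ ((j + 1) * j / 2) := by
  have hsum : ∑ i ∈ range j, (j - i) = ∑ i ∈ range (j + 1), i := by
    rw [sum_range_succ', ← sum_range_reflect]
    exact sum_congr rfl fun i hi => by have := mem_range.mp hi; omega
  rw [prod_pow_eq_pow_sum, hsum, sum_range_id, Nat.add_sub_cancel]

theorem Finset.prod_range_erase_eq {M : Type*} [CommMonoid M] (f : ℕ → M) (j k : ℕ) :
    ∏ i ∈ (range (j + 1 + k)).erase j, f i =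
      (∏ i ∈ range j, f i) * ∏ i ∈ range k, f (j + 1 + i) := by
  have hsplit : (range (j + 1 + k)).erase j = range j ∪ Ico (j + 1) (j + 1 + k) := by
    ext i; simp only [mem_erase, mem_range, mem_union, mem_Ico]; omega
  have hdisj : Disjoint (range j) (Ico (j + 1) (j + 1 + k)) :=
    disjoint_left.mpr fun i hi hi' => by simp only [mem_range, mem_Ico] at hi hi'; omega
  rw [hsplit, prod_union hdisj, prod_Ico_eq_prod_range, Nat.add_sub_cancel_left]

theorem add_inv_sub_add_inv {K : Type*} [Field K] {x y : K} (hx : x ≠ 0) (hy : y ≠ 0) :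
    (y + y⁻¹) - (x + x⁻¹) = (y - x) * (x * y - 1) / (x * y) := by
  field_simp
  ring

namespace QProductExpansion

section CommRing
variable {R : Type*} [CommRing R]

-- `(q; q)_n`
def qPochhammer (q : R) (n : ℕ) : R := ∏ i ∈ range n, (1 - q ^ (i + 1))

-- `(q^(c+1); q)_n`
def shiftedQPochhammer (q : R) (c n : ℕ) : R := ∏ i ∈ range n, (1 - q ^ (c + i + 1))

lemma qPochhammer_succ (q : R) (n : ℕ) :
    qPochhammer q (n + 1) = qPochhammer q n * (1 - q ^ (n + 1)) :=
  prod_range_succ _ _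

lemma qPochhammer_add (q : R) (c n : ℕ) :
    qPochhammer q (c + n) = qPochhammer q c * shiftedQPochhammer q c n := by
  simp only [qPochhammer, shiftedQPochhammer, prod_range_add]

lemma prod_range_one_sub_pow_sub (q : R) (j : ℕ) :
    ∏ i ∈ range j, (1 - q ^ (j - i)) = qPochhammer q j := by
  rw [qPochhammer, ← prod_range_reflect]
  refine prod_congr rfl fun i hi => ?_
  rw [show j - (j - 1 - i) = i + 1 by have := mem_range.mp hi; omega]

end CommRing

section Real
variable {q : ℝ}

lemma one_sub_pow_pos (hq0 : 0 ≤ q) (hq1 : q < 1) (n : ℕ) : 0 < 1 - q ^ (n + 1) :=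
  sub_pos.mpr (pow_lt_one₀ hq0 hq1 n.succ_ne_zero)

lemma qPochhammer_pos (hq0 : 0 ≤ q) (hq1 : q < 1) (n : ℕ) : 0 < qPochhammer q n :=
  prod_pos fun i _ => one_sub_pow_pos hq0 hq1 i

lemma shiftedQPochhammer_pos (hq0 : 0 ≤ q) (hq1 : q < 1) (c n : ℕ) :
    0 < shiftedQPochhammer q c n :=
  prod_pos fun i _ => one_sub_pow_pos hq0 hq1 (c + i)

lemma shiftedQPochhammer_le_one (hq0 : 0 ≤ q) (hq1 : q < 1) (c n : ℕ) :
    shiftedQPochhammer q c n ≤ 1 :=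
  prod_le_one (fun i _ => (one_sub_pow_pos hq0 hq1 (c + i)).le)
    fun _ _ => sub_le_self _ (pow_nonneg hq0 _)

lemma shiftedQPochhammer_eq_div (hq0 : 0 ≤ q) (hq1 : q < 1) (c n : ℕ) :
    shiftedQPochhammer q c n = qPochhammer q (c + n) / qPochhammer q c := by
  rw [qPochhammer_add, mul_div_cancel_left₀ _ (qPochhammer_pos hq0 hq1 c).ne']

lemma one_sub_pow_div_le_shiftedQPochhammer (hq0 : 0 ≤ q) (hq1 : q < 1) (c n : ℕ) :
    1 - q ^ (c + 1) / (1 - q) ≤ shiftedQPochhammer q c n := by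
  have hgeom : ∑ i ∈ range n, q ^ (c + i + 1) ≤ q ^ (c + 1) / (1 - q) := by
    have := geom_sum_Ico_le_of_lt_one (m := c + 1) (n := c + 1 + n) hq0 hq1
    rw [sum_Ico_eq_sum_range, Nat.add_sub_cancel_left] at this
    simpa only [add_right_comm] using this
  exact (sub_le_sub_left hgeom 1).trans <| one_sub_sum_le_prod_one_sub (range n)
    (fun _ _ => pow_nonneg hq0 _) fun _ _ => pow_le_one₀ hq0 hq1.le

lemma tendsto_shiftedQPochhammer (hq0 : 0 ≤ q) (hq1 : q < 1) {c : ℕ → ℕ}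
    (hc : Tendsto c atTop atTop) (n : ℕ) :
    Tendsto (fun N => shiftedQPochhammer q (c N) n) atTop (𝓝 1) := by
  have hpow := tendsto_pow_atTop_nhds_zero_of_lt_one hq0 hq1
  simpa [shiftedQPochhammer, add_assoc] using tendsto_finsetProd (range n) fun i _ =>
    (hpow.comp ((tendsto_add_atTop_nat (i + 1)).comp hc)).const_sub (1 : ℝ)

end Real

noncomputable section

def factor (q t : ℝ) (n : ℕ) : ℝ :=
  (1 - q ^ (n + 1)) ^ 2 / ((1 - q ^ (n + 1)) ^ 2 + t ^ 2 * q ^ (n + 1))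

def seriesTerm (q t : ℝ) (n : ℕ) : ℝ :=
  (-1) ^ n * q ^ ((n + 1) * n / 2) * (1 + q ^ (n + 1)) * factor q t n

def node (q : ℝ) (n : ℕ) : ℝ := q ^ (n + 1) + (q ^ (n + 1))⁻¹

def crossFactor (q : ℝ) (i j : ℕ) : ℝ :=
  (1 - q ^ (i + 1)) ^ 2 * q ^ (j + 1) /
    ((q ^ (j + 1) - q ^ (i + 1)) * (1 - q ^ (i + 1) * q ^ (j + 1)))

def tailRatio (q : ℝ) (j N : ℕ) : ℝ :=
  shiftedQPochhammer q (N - j - 1) (j + 1) / shiftedQPochhammer q N (j + 1)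

section
variable {q : ℝ}

lemma injective_node (hq0 : 0 < q) (hq1 : q < 1) : Function.Injective (node q) := by
  intro i j hij
  have hx := pow_pos hq0 (i + 1)
  have hy := pow_pos hq0 (j + 1)
  have hxy : q ^ (i + 1) * q ^ (j + 1) < 1 :=
    mul_lt_one_of_nonneg_of_lt_one_left hx.le (pow_lt_one₀ hq0.le hq1 i.succ_ne_zero)
      (pow_le_one₀ hq0.le hq1.le)
  have h := sub_eq_zero.mpr hij
  rw [node, node, add_inv_sub_add_inv hy.ne' hx.ne', div_eq_zero_iff, mul_eq_zero,
    mul_eq_zero, sub_eq_zero, sub_eq_zero] at h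
  obtain (h | h) | h | h := h
  · simpa using pow_right_injective₀ hq0 hq1.ne h
  · exact absurd (mul_comm (q ^ (i + 1)) _ ▸ h) hxy.ne
  · exact absurd h hy.ne'
  · exact absurd h hx.ne'

-- `(1 - x)² + t²x = x ((x + x⁻¹) - (2 - t²))`, so `t` cancels out.
lemma sub_node_div_mul_factor (hq0 : 0 < q) (hq1 : q < 1) (t : ℝ) {i j : ℕ} (hij : i ≠ j) :
    (2 - t ^ 2 - node q i) / (node q j - node q i) * factor q t i = crossFactor q i j := by
  have hx := pow_pos hq0 (i + 1)
  have hy := pow_pos hq0 (j + 1)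
  have hx1 := pow_lt_one₀ hq0.le hq1 i.succ_ne_zero
  have hxy : q ^ (i + 1) * q ^ (j + 1) < 1 :=
    mul_lt_one_of_nonneg_of_lt_one_left hx.le hx1 (pow_le_one₀ hq0.le hq1.le)
  have hne : q ^ (j + 1) - q ^ (i + 1) ≠ 0 :=
    sub_ne_zero.mpr ((pow_right_injective₀ hq0 hq1.ne).ne (by omega))
  rw [node, node, add_inv_sub_add_inv hx.ne' hy.ne', factor, crossFactor]
  generalize q ^ (i + 1) = x at *
  generalize q ^ (j + 1) = y at *
  have hD : 0 < (1 - x) ^ 2 + t ^ 2 * x :=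
    add_pos_of_pos_of_nonneg (pow_pos (sub_pos.2 hx1) 2) (by positivity)
  have h1 : 1 - x * y ≠ 0 := by linarith
  have h2 : x * y - 1 ≠ 0 := by linarith
  field_simp
  ring

lemma crossFactor_of_lt (hq0 : 0 < q) (hq1 : q < 1) {i j : ℕ} (h : i < j) :
    crossFactor q i j =
      (-1) * q ^ (j - i) * (1 - q ^ (i + 1)) ^ 2 /
        ((1 - q ^ (j - i)) * (1 - q ^ (j + 1 + i + 1))) := by
  obtain ⟨k, rfl⟩ := Nat.exists_eq_add_of_lt h
  rw [crossFactor, show i + k + 1 - i = k + 1 by omega,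
    show q ^ (i + k + 1 + 1) = q ^ (i + 1) * q ^ (k + 1) by ring,
    show q ^ (i + 1) * (q ^ (i + 1) * q ^ (k + 1)) = q ^ (i + k + 1 + 1 + i + 1) by ring]
  have hx := pow_pos hq0 (i + 1)
  have hr := one_sub_pow_pos hq0.le hq1 k
  have hz := one_sub_pow_pos hq0.le hq1 (i + k + 1 + 1 + i)
  generalize q ^ (i + 1) = x at *
  generalize q ^ (k + 1) = r at *
  have hxr : x * r - x ≠ 0 := by nlinarith
  rw [div_eq_div_iff (mul_ne_zero hxr hz.ne') (mul_ne_zero hr.ne' hz.ne')]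
  ring

lemma crossFactor_add (hq0 : 0 < q) (hq1 : q < 1) (j k : ℕ) :
    crossFactor q (j + 1 + k) j =
      (1 - q ^ (j + 1 + k + 1)) ^ 2 / ((1 - q ^ (k + 1)) * (1 - q ^ (2 * j + 2 + k + 1))) := by
  rw [crossFactor, show q ^ (j + 1 + k + 1) = q ^ (j + 1) * q ^ (k + 1) by ring,
    show q ^ (j + 1) * q ^ (k + 1) * q ^ (j + 1) = q ^ (2 * j + 2 + k + 1) by ring]
  have hy := pow_pos hq0 (j + 1)
  have hr := one_sub_pow_pos hq0.le hq1 k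
  have hz := one_sub_pow_pos hq0.le hq1 (2 * j + 2 + k)
  field_simp

lemma prod_crossFactor_lt (hq0 : 0 < q) (hq1 : q < 1) (j : ℕ) :
    ∏ i ∈ range j, crossFactor q i j =
      (-1) ^ j * q ^ ((j + 1) * j / 2) * qPochhammer q j / shiftedQPochhammer q (j + 1) j := by
  rw [prod_congr rfl fun i hi => crossFactor_of_lt hq0 hq1 (mem_range.mp hi), prod_div_distrib,
    prod_mul_distrib, prod_mul_distrib, prod_mul_distrib, prod_const, card_range, prod_pow,
    prod_range_pow_sub, prod_range_one_sub_pow_sub]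
  have := qPochhammer_pos hq0.le hq1 j
  field_simp
  rfl

lemma prod_crossFactor_add (hq0 : 0 < q) (hq1 : q < 1) (j k : ℕ) :
    ∏ i ∈ range k, crossFactor q (j + 1 + i) j =
      shiftedQPochhammer q (j + 1) k ^ 2 /
        (qPochhammer q k * shiftedQPochhammer q (2 * j + 2) k) := by
  rw [prod_congr rfl fun i _ => crossFactor_add hq0 hq1 j i, prod_div_distrib, prod_mul_distrib,
    prod_pow]
  rfl

lemma prod_erase_crossFactor (hq0 : 0 < q) (hq1 : q < 1) {j N : ℕ} (hj : j < N) :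
    ∏ i ∈ (range N).erase j, crossFactor q i j =
      (-1) ^ j * q ^ ((j + 1) * j / 2) * (1 + q ^ (j + 1)) * tailRatio q j N := by
  obtain ⟨k, rfl⟩ : ∃ k, N = j + 1 + k := ⟨N - j - 1, by omega⟩
  rw [prod_range_erase_eq, prod_crossFactor_lt hq0 hq1, prod_crossFactor_add hq0 hq1, tailRatio,
    show j + 1 + k - j - 1 = k by omega]
  simp only [shiftedQPochhammer_eq_div hq0.le hq1]
  rw [show 2 * j + 2 + k = j + 1 + k + (j + 1) by omega, show k + (j + 1) = j + 1 + k by omega,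
    show j + 1 + j = 2 * j + 1 by omega]
  have hφ2 : qPochhammer q (2 * j + 2) =
      qPochhammer q (2 * j + 1) * (1 - q ^ (j + 1)) * (1 + q ^ (j + 1)) := by
    rw [qPochhammer_succ]; ring
  have hφ1 : qPochhammer q (j + 1) = qPochhammer q j * (1 - q ^ (j + 1)) := qPochhammer_succ q j
  have := one_sub_pow_pos hq0.le hq1 j
  rw [hφ2, hφ1]
  field_simp [fun n => (qPochhammer_pos hq0.le hq1 n).ne']

lemma prod_range_factor_eq_sum (hq0 : 0 < q) (hq1 : q < 1) (t : ℝ) {N : ℕ} (hN : 0 < N) :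
    ∏ i ∈ range N, factor q t i = ∑ j ∈ range N, seriesTerm q t j * tailRatio q j N := by
  have hlagrange := Lagrange.sum_prod_erase_div_eq_one (injective_node hq0 hq1).injOn
    (nonempty_range_iff.mpr hN.ne') (2 - t ^ 2)
  calc ∏ i ∈ range N, factor q t i
      = ∑ j ∈ range N, (∏ i ∈ (range N).erase j,
          (2 - t ^ 2 - node q i) / (node q j - node q i)) * ∏ i ∈ range N, factor q t i := by
        rw [← sum_mul, hlagrange, one_mul]
    _ = ∑ j ∈ range N, (∏ i ∈ (range N).erase j,
          ((2 - t ^ 2 - node q i) / (node q j - node q i) * factor q t i)) * factor q t j := by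
        refine sum_congr rfl fun j hj => ?_
        rw [← prod_erase_mul _ _ hj, prod_mul_distrib, mul_assoc]
    _ = ∑ j ∈ range N, seriesTerm q t j * tailRatio q j N := by
        refine sum_congr rfl fun j hj => ?_
        rw [prod_congr rfl fun i hi => sub_node_div_mul_factor hq0 hq1 t (ne_of_mem_erase hi),
          prod_erase_crossFactor hq0 hq1 (mem_range.mp hj), seriesTerm]
        ring

lemma abs_factor_le_one (hq0 : 0 ≤ q) (hq1 : q < 1) (t : ℝ) (n : ℕ) :
    |factor q t n| ≤ 1 := by
  have ha := pow_pos (one_sub_pow_pos hq0 hq1 n) 2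
  have hb : 0 ≤ t ^ 2 * q ^ (n + 1) := by positivity
  rw [factor, abs_of_nonneg (by positivity), div_le_one (by positivity)]
  linarith

lemma abs_factor_sub_one_le (hq0 : 0 ≤ q) (hq1 : q < 1) (t : ℝ) (n : ℕ) :
    |factor q t n - 1| ≤ t ^ 2 / (1 - q) ^ 2 * q ^ (n + 1) := by
  have ha := one_sub_pow_pos hq0 hq1 n
  have hb : 0 ≤ t ^ 2 * q ^ (n + 1) := by positivity
  have hD : 0 < (1 - q ^ (n + 1)) ^ 2 + t ^ 2 * q ^ (n + 1) := by positivity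
  have hq : (1 - q) ^ 2 ≤ (1 - q ^ (n + 1)) ^ 2 + t ^ 2 * q ^ (n + 1) := by
    have hX : q ^ (n + 1) ≤ q := pow_le_of_le_one hq0 hq1.le n.succ_ne_zero
    have := pow_le_pow_left₀ (sub_nonneg.mpr hq1.le) (sub_le_sub_left hX 1) 2
    linarith
  have hsub : factor q t n - 1 =
      -(t ^ 2 * q ^ (n + 1) / ((1 - q ^ (n + 1)) ^ 2 + t ^ 2 * q ^ (n + 1))) := by
    rw [factor]; field_simp; ring
  rw [hsub, abs_neg, abs_of_nonneg (by positivity)]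
  calc t ^ 2 * q ^ (n + 1) / ((1 - q ^ (n + 1)) ^ 2 + t ^ 2 * q ^ (n + 1))
      ≤ t ^ 2 * q ^ (n + 1) / (1 - q) ^ 2 :=
        div_le_div_of_nonneg_left hb (pow_pos (sub_pos.mpr hq1) 2) hq
    _ = t ^ 2 / (1 - q) ^ 2 * q ^ (n + 1) := by ring

lemma multipliable_factor (hq0 : 0 ≤ q) (hq1 : q < 1) (t : ℝ) : Multipliable (factor q t) := by
  have hgeom : Summable fun n : ℕ => t ^ 2 / (1 - q) ^ 2 * q ^ (n + 1) :=
    ((summable_nat_add_iff 1).mpr (summable_geometric_of_lt_one hq0 hq1)).mul_left _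
  simpa using Real.multipliable_one_add_of_summable
    (hgeom.of_norm_bounded fun n => abs_factor_sub_one_le hq0 hq1 t n)

lemma abs_seriesTerm_le (hq0 : 0 ≤ q) (hq1 : q < 1) (t : ℝ) (n : ℕ) :
    |seriesTerm q t n| ≤ 2 * q ^ n := by
  rw [seriesTerm, abs_mul, abs_mul, abs_mul, abs_pow, abs_neg, abs_one, one_pow, one_mul,
    abs_of_nonneg (pow_nonneg hq0 _), abs_of_nonneg (by positivity)]
  have h1 : q ^ ((n + 1) * n / 2) ≤ q ^ n := pow_le_pow_of_le_one hq0 hq1.le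
    ((Nat.le_div_iff_mul_le two_pos).mpr (by rcases n with _ | n <;> nlinarith))
  have h2 : 1 + q ^ (n + 1) ≤ 2 := by linarith [pow_le_one₀ (n := n + 1) hq0 hq1.le]
  calc q ^ ((n + 1) * n / 2) * (1 + q ^ (n + 1)) * |factor q t n| ≤ q ^ n * 2 * 1 :=
        mul_le_mul (mul_le_mul h1 h2 (by positivity) (pow_nonneg hq0 _))
          (abs_factor_le_one hq0 hq1 t n) (abs_nonneg _) (by positivity)
    _ = 2 * q ^ n := by ring

lemma summable_abs_seriesTerm (hq0 : 0 ≤ q) (hq1 : q < 1) (t : ℝ) :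
    Summable fun n => |seriesTerm q t n| :=
  ((summable_geometric_of_lt_one hq0 hq1).mul_left 2).of_nonneg_of_le (fun _ => abs_nonneg _)
    (abs_seriesTerm_le hq0 hq1 t)

lemma tendsto_tailRatio (hq0 : 0 ≤ q) (hq1 : q < 1) (j : ℕ) :
    Tendsto (tailRatio q j) atTop (𝓝 1) := by
  have hnum := tendsto_shiftedQPochhammer hq0 hq1
    ((tendsto_sub_atTop_nat 1).comp (tendsto_sub_atTop_nat j)) (j + 1)
  have hden := tendsto_shiftedQPochhammer hq0 hq1 tendsto_id (j + 1)
  exact div_one (1 : ℝ) ▸ hnum.div hden one_ne_zero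

lemma eventually_abs_tailRatio_le_two (hq0 : 0 ≤ q) (hq1 : q < 1) :
    ∀ᶠ N in atTop, ∀ j, |tailRatio q j N| ≤ 2 := by
  have h : Tendsto (fun N : ℕ => q ^ (N + 1) / (1 - q)) atTop (𝓝 0) := by
    simpa using ((tendsto_pow_atTop_nhds_zero_of_lt_one hq0 hq1).comp
      (tendsto_add_atTop_nat 1)).div_const (1 - q)
  filter_upwards [h.eventually (ge_mem_nhds (by norm_num : (0 : ℝ) < 1 / 2))] with N hN j
  have hden := one_sub_pow_div_le_shiftedQPochhammer hq0 hq1 N (j + 1)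
  have hnum := shiftedQPochhammer_pos hq0 hq1 (N - j - 1) (j + 1)
  rw [tailRatio, abs_of_pos (div_pos hnum (by linarith)), div_le_iff₀ (by linarith)]
  linarith [shiftedQPochhammer_le_one hq0 hq1 (N - j - 1) (j + 1)]

lemma tendsto_sum_seriesTerm_mul_tailRatio (hq0 : 0 ≤ q) (hq1 : q < 1) (t : ℝ) :
    Tendsto (fun N => ∑ j ∈ range N, seriesTerm q t j * tailRatio q j N) atTop
      (𝓝 (∑' j, seriesTerm q t j)) := by
  refine (tendsto_tsum_of_dominated_convergence
    (f := fun N => (range N : Set ℕ).indicator fun j => seriesTerm q t j * tailRatio q j N)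
    ((summable_abs_seriesTerm hq0 hq1 t).mul_left 2) (fun j => ?_) ?_).congr
    fun N => (sum_eq_tsum_indicator _ _).symm
  · have h := (tendsto_tailRatio hq0 hq1 j).const_mul (seriesTerm q t j)
    rw [mul_one] at h
    refine h.congr' ?_
    filter_upwards [eventually_gt_atTop j] with N hN
    rw [Set.indicator_of_mem (by simpa using hN)]
  · filter_upwards [eventually_abs_tailRatio_le_two hq0 hq1] with N hN j
    refine (norm_indicator_le_norm_self _ _).trans ?_
    rw [Real.norm_eq_abs, abs_mul, mul_comm]
    exact mul_le_mul_of_nonneg_right (hN j) (abs_nonneg _)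

end

end

end QProductExpansion

open QProductExpansion in
theorem stmt1 (q : ℝ) (hq0 : 0 < q) (hq1 : q < 1) (t : ℝ) :
    Multipliable (fun n : ℕ =>
      (1 - q ^ (n + 1)) ^ 2 / ((1 - q ^ (n + 1)) ^ 2 + t ^ 2 * q ^ (n + 1))) ∧
    HasSum
      (fun n : ℕ =>
        (-1 : ℝ) ^ n * q ^ ((n + 1) * n / 2) * (1 + q ^ (n + 1)) *
          ((1 - q ^ (n + 1)) ^ 2 / ((1 - q ^ (n + 1)) ^ 2 + t ^ 2 * q ^ (n + 1))))
      (∏' n : ℕ, (1 - q ^ (n + 1)) ^ 2 / ((1 - q ^ (n + 1)) ^ 2 + t ^ 2 * q ^ (n + 1))) := by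
  have hprod := multipliable_factor hq0.le hq1 t
  refine ⟨hprod, ?_⟩
  show HasSum (seriesTerm q t) (∏' n, factor q t n)
  have hpartial : Tendsto (fun N => ∏ i ∈ range N, factor q t i) atTop
      (𝓝 (∑' n, seriesTerm q t n)) := by
    refine (tendsto_sum_seriesTerm_mul_tailRatio hq0.le hq1 t).congr' ?_
    filter_upwards [eventually_gt_atTop 0] with N hN
    exact (prod_range_factor_eq_sum hq0 hq1 t hN).symm
  rw [tendsto_nhds_unique hprod.hasProd.tendsto_prod_nat hpartial]
  exact (summable_abs_seriesTerm hq0.le hq1 t).of_abs.hasSum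
end

section
/- For every positive integer k, the rescaled q-zeta value satisfies lim_{q→1⁻} (1−q)^{2k} ζ_q(2k) = ζ(2k), where ζ is the Riemann zeta function. -/
open scoped BigOperators Topology

/-- The q-zeta value `ζ_q(2k) = ∑_{m=1}^∞ q^{mk}/(1-q^m)^{2k}`. -/
noncomputable def qZeta (q : ℝ) (k : ℕ) : ℝ :=
  ∑' n : ℕ, q ^ ((n + 1) * k) / (1 - q ^ (n + 1)) ^ (2 * k)

/-!
Since `1 - q^m = (1 - q)[m]_q` with `[m]_q = 1 + q + ⋯ + q^(m-1)`, the rescaled series is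
`∑ q^(mk) / [m]_q^(2k)`, whose terms tend to `1 / m^(2k)` as `q → 1`. By Cauchy–Schwarz
(equivalently AM–GM on the pairs `q^i, q^(m-1-i)`), `[m]_q² ≥ m² q^(m-1)`, so for `0 ≤ q ≤ 1`
each term is at most `1 / m^(2k)`, which is summable for `k ≥ 1`; dominated convergence
(Tannery's theorem) concludes.
-/

open Filter Finset

lemma sq_mul_pow_le_geom_sum_sq {q : ℝ} (hq : 0 ≤ q) (n : ℕ) :
    ((n : ℝ) + 1) ^ 2 * q ^ n ≤ (∑ i ∈ range (n + 1), q ^ i) ^ 2 := by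
  have hreflect : ∑ i ∈ range (n + 1), q ^ (n - i) = ∑ i ∈ range (n + 1), q ^ i := by
    rw [← sum_range_reflect]
    exact sum_congr rfl fun i hi => by
      rw [Nat.add_sub_cancel, Nat.sub_sub_self (mem_range_succ_iff.mp hi)]
  have hcs := sum_sq_le_sum_mul_sum_of_sq_le_mul (range (n + 1))
    (r := fun _ => √(q ^ n)) (f := fun i => q ^ i) (g := fun i => q ^ (n - i))
    (fun i _ => by positivity) (fun i _ => by positivity)
    (fun i hi => by
      rw [Real.sq_sqrt (by positivity), ← pow_add,
        Nat.add_sub_cancel' (mem_range_succ_iff.mp hi)])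
  rw [sum_const, card_range, nsmul_eq_mul, mul_pow, Real.sq_sqrt (by positivity), hreflect,
    ← sq] at hcs
  exact_mod_cast hcs

lemma pow_div_geom_sum_pow_le {q : ℝ} (hq₀ : 0 ≤ q) (hq₁ : q ≤ 1) (k n : ℕ) :
    q ^ ((n + 1) * k) / (∑ i ∈ range (n + 1), q ^ i) ^ (2 * k) ≤
      1 / ((n : ℝ) + 1) ^ (2 * k) := by
  rw [div_le_div_iff₀ (pow_pos (geom_sum_pos hq₀ n.succ_ne_zero) _) (by positivity), one_mul]
  calc q ^ ((n + 1) * k) * ((n : ℝ) + 1) ^ (2 * k)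
      ≤ q ^ (n * k) * ((n : ℝ) + 1) ^ (2 * k) := by
        have hpow := pow_le_pow_of_le_one hq₀ hq₁ (Nat.mul_le_mul_right k n.le_succ)
        exact mul_le_mul_of_nonneg_right hpow (by positivity)
    _ = (((n : ℝ) + 1) ^ 2 * q ^ n) ^ k := by rw [mul_pow, ← pow_mul, ← pow_mul, mul_comm]
    _ ≤ ((∑ i ∈ range (n + 1), q ^ i) ^ 2) ^ k := by
        gcongr
        exact sq_mul_pow_le_geom_sum_sq hq₀ n
    _ = (∑ i ∈ range (n + 1), q ^ i) ^ (2 * k) := by rw [← pow_mul]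

lemma one_sub_pow_mul_qZeta {q : ℝ} (hq : q ≠ 1) (k : ℕ) :
    (1 - q) ^ (2 * k) * qZeta q k =
      ∑' n : ℕ, q ^ ((n + 1) * k) / (∑ i ∈ range (n + 1), q ^ i) ^ (2 * k) := by
  rw [qZeta, ← tsum_mul_left]
  refine tsum_congr fun n => ?_
  rw [← mul_neg_geom_sum, mul_pow, mul_div_assoc',
    mul_div_mul_left _ _ (pow_ne_zero _ (sub_ne_zero.mpr hq.symm))]

lemma tendsto_pow_div_geom_sum_pow (k n : ℕ) :
    Tendsto (fun q : ℝ => q ^ ((n + 1) * k) / (∑ i ∈ range (n + 1), q ^ i) ^ (2 * k))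
      (𝓝 1) (𝓝 (1 / ((n : ℝ) + 1) ^ (2 * k))) := by
  have hden : Tendsto (fun q : ℝ => (∑ i ∈ range (n + 1), q ^ i) ^ (2 * k)) (𝓝 1)
      (𝓝 (((n : ℝ) + 1) ^ (2 * k))) := by
    simpa [add_comm] using
      (by fun_prop : Continuous fun q : ℝ => (∑ i ∈ range (n + 1), q ^ i) ^ (2 * k)).tendsto 1
  have hnum : Tendsto (fun q : ℝ => q ^ ((n + 1) * k)) (𝓝 1) (𝓝 1) := by
    simpa using (continuous_pow ((n + 1) * k)).tendsto (1 : ℝ)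
  exact hnum.div hden (by positivity)

theorem stmt3 (k : ℕ) (hk : 0 < k) :
    Filter.Tendsto (fun q : ℝ => (1 - q) ^ (2 * k) * qZeta q k)
      (𝓝[<] (1 : ℝ)) (𝓝 (∑' m : ℕ, 1 / ((m : ℝ) + 1) ^ (2 * k))) := by
  have hIoo : Set.Ioo (0 : ℝ) 1 ∈ 𝓝[<] (1 : ℝ) := Ioo_mem_nhdsLT zero_lt_one
  have hsummable : Summable fun n : ℕ => 1 / ((n : ℝ) + 1) ^ (2 * k) := by
    exact_mod_cast (summable_nat_add_iff 1).mpr (Real.summable_one_div_nat_pow.mpr (by omega))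
  have hbound : ∀ᶠ q in 𝓝[<] (1 : ℝ), ∀ n : ℕ,
      ‖q ^ ((n + 1) * k) / (∑ i ∈ range (n + 1), q ^ i) ^ (2 * k)‖ ≤
        1 / ((n : ℝ) + 1) ^ (2 * k) := by
    filter_upwards [hIoo] with q ⟨hq₀, hq₁⟩ n
    have hgeom := geom_sum_pos hq₀.le n.succ_ne_zero
    rw [Real.norm_of_nonneg (by positivity)]
    exact pow_div_geom_sum_pow_le hq₀.le hq₁.le k n
  refine (tendsto_tsum_of_dominated_convergence hsummable
    (fun n => (tendsto_pow_div_geom_sum_pow k n).mono_left nhdsWithin_le_nhds) hbound).congr' ?_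
  filter_upwards [self_mem_nhdsWithin] with q hq
  exact (one_sub_pow_mul_qZeta hq.ne k).symm
end

section
/- For every real q with 0 < q < 1 and every real t, the series ∑_{m odd, m ≥ 1} (−1)^{(m−1)/2} q^{(m^2−1)/4} (1+q^m)(1−q^m)/((1−q^m)^2 + t^2 q^m) converges, the infinite product ∏_{m odd, m ≥ 1} (1−q^m)^2/((1−q^m)^2 + t^2 q^m) converges, and the series equals ψ(q)^2 times the product. -/
open scoped BigOperators

/-- Ramanujan's theta function `ψ(q) = ∏_{m=1}^∞ (1−q^{2m})/(1−q^{2m−1})`. -/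
noncomputable def psi (q : ℝ) : ℝ :=
  ∏' n : ℕ, (1 - q ^ (2 * (n + 1))) / (1 - q ^ (2 * n + 1))

/-!
Put `x k = q ^ (2k+1)` and `D k = (1 - x k)² + u x k`, with `u = t²`. Each `D k` is linear in `u`,
with root `-(1 - x k)² / x k`, so for finite `N` the product `∏_{k ≤ N} 1 / D k` has a partial
fraction expansion in `u`. Its coefficients `∏_{j ≠ k} x k / ((x k - x j)(1 - x k x j))` telescope
into `(-1)^k q^{k(k+1)} (1 - x k²) / ((q²;q²)_{N-k} (q²;q²)_{N+k+1})`. Letting `N → ∞` by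
dominated convergence gives `∑ₖ (-1)^k q^{k(k+1)} (1 - x k²) / D k = (q²;q²)_∞² ∏ₖ 1 / D k`, and
`ψ(q) = (q²;q²)_∞ / (q;q²)_∞` turns this into the stated form.
-/

open Finset Filter Topology

theorem Finset.prod_range_sub_eq_prod_range_succ {M : Type*} [CommMonoid M] (f : ℕ → M)
    (k : ℕ) : ∏ j ∈ range k, f (k - j) = ∏ j ∈ range k, f (j + 1) := by
  rw [← prod_range_reflect (fun j => f (j + 1))]
  exact prod_congr rfl fun j hj => by rw [mem_range] at hj; congr 1; omega

theorem Lagrange.sum_nodalWeight_mul_inv_sub {F ι : Type*} [Field F] [DecidableEq ι]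
    {s : Finset ι} {v : ι → F} {x : F} (hvs : Set.InjOn v s) (hs : s.Nonempty)
    (hx : ∀ i ∈ s, x ≠ v i) :
    ∑ i ∈ s, nodalWeight s v i * (x - v i)⁻¹ = ∏ i ∈ s, (x - v i)⁻¹ := by
  have h := eval_interpolate_not_at_node 1 hx
  simp only [interpolate_one hvs hs, Polynomial.eval_one, eval_nodal, Pi.one_apply, mul_one] at h
  rw [prod_inv_distrib]
  exact eq_inv_of_mul_eq_one_right h.symm

theorem prod_inv_one_sub_sq_add_mul {F ι : Type*} [Field F] [DecidableEq ι] {s : Finset ι}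
    (hs : s.Nonempty) {x : ι → F} (u : F) (hx : ∀ i ∈ s, x i ≠ 0)
    (hD : ∀ i ∈ s, (1 - x i) ^ 2 + u * x i ≠ 0)
    (hxx : ∀ i ∈ s, ∀ j ∈ s, i ≠ j → (x i - x j) * (1 - x i * x j) ≠ 0) :
    ∏ i ∈ s, ((1 - x i) ^ 2 + u * x i)⁻¹ =
      ∑ i ∈ s, (∏ j ∈ s.erase i, x i / ((x i - x j) * (1 - x i * x j))) /
        ((1 - x i) ^ 2 + u * x i) := by
  set v : ι → F := fun i => -(1 - x i) ^ 2 / x i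
  have hu : ∀ i ∈ s, u - v i = ((1 - x i) ^ 2 + u * x i) / x i := by
    intro i hi
    simp only [v]
    field_simp [hx i hi]
    ring
  have hv : ∀ i ∈ s, ∀ j ∈ s, v i - v j = (x i - x j) * (1 - x i * x j) / (x i * x j) := by
    intro i hi j hj
    simp only [v]
    field_simp [hx i hi, hx j hj]
    ring
  have hinj : Set.InjOn v s := by
    intro i hi j hj hij
    by_contra hne
    have := hv i hi j hj
    rw [hij, sub_self, eq_comm] at this
    exact div_ne_zero (hxx i hi j hj hne) (mul_ne_zero (hx i hi) (hx j hj)) this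
  have hpole : ∀ i ∈ s, u ≠ v i := fun i hi =>
    sub_ne_zero.mp (hu i hi ▸ div_ne_zero (hD i hi) (hx i hi))
  have hX : ∏ i ∈ s, x i ≠ 0 := prod_ne_zero_iff.mpr hx
  apply mul_left_cancel₀ hX
  calc (∏ i ∈ s, x i) * ∏ i ∈ s, ((1 - x i) ^ 2 + u * x i)⁻¹
      = ∏ i ∈ s, (u - v i)⁻¹ := by
        rw [← prod_mul_distrib]
        refine prod_congr rfl fun i hi => ?_
        rw [hu i hi, inv_div, div_eq_mul_inv]
    _ = ∑ i ∈ s, Lagrange.nodalWeight s v i * (u - v i)⁻¹ :=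
        (Lagrange.sum_nodalWeight_mul_inv_sub hinj hs hpole).symm
    _ = _ := by
        rw [mul_sum]
        refine sum_congr rfl fun i hi => ?_
        have hw : Lagrange.nodalWeight s v i =
            (∏ j ∈ s.erase i, x j) * ∏ j ∈ s.erase i, x i / ((x i - x j) * (1 - x i * x j)) := by
          rw [Lagrange.nodalWeight, ← prod_mul_distrib]
          refine prod_congr rfl fun j hj => ?_
          rw [hv i hi j (mem_of_mem_erase hj), inv_div]
          ring
        rw [hw, hu i hi, inv_div, ← mul_prod_erase s x hi]
        ring

theorem Real.multipliable_of_summable_sub_one {ι : Type*} {f : ι → ℝ}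
    (hf : Summable fun i => f i - 1) : Multipliable f := by
  simpa using Real.multipliable_one_add_of_summable hf

theorem Real.tprod_pos_of_summable_sub_one {ι : Type*} {f : ι → ℝ} (hpos : ∀ i, 0 < f i)
    (hf : Summable fun i => f i - 1) : 0 < ∏' i, f i := by
  rw [← Real.rexp_tsum_eq_tprod hpos (by simpa using Real.summable_log_one_add_of_summable hf)]
  exact Real.exp_pos _

theorem HasProd.le_prod_range {f : ℕ → ℝ} {a : ℝ} (h : HasProd f a) (h0 : ∀ n, 0 ≤ f n)
    (h1 : ∀ n, f n ≤ 1) (M : ℕ) : a ≤ ∏ i ∈ range M, f i := by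
  refine Antitone.le_of_tendsto (antitone_nat_of_succ_le fun n => ?_) h.tendsto_prod_nat M
  rw [prod_range_succ]
  exact mul_le_of_le_one_right (prod_nonneg fun i _ => h0 i) (h1 n)

theorem summable_pow_of_le {q : ℝ} (hq0 : 0 ≤ q) (hq1 : q < 1) {e : ℕ → ℕ} (he : ∀ n, n ≤ e n) :
    Summable fun n => q ^ e n :=
  (summable_geometric_of_lt_one hq0 hq1).of_nonneg_of_le (fun _ => pow_nonneg hq0 _)
    fun n => pow_le_pow_of_le_one hq0 hq1.le (he n)

namespace RamanujanPsi

noncomputable section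

/-- The q-Pochhammer symbol `(q²; q²)_M`. -/
def evenPoch (q : ℝ) (M : ℕ) : ℝ := ∏ i ∈ range M, (1 - q ^ (2 * (i + 1)))

def denom (q u : ℝ) (n : ℕ) : ℝ := (1 - q ^ (2 * n + 1)) ^ 2 + u * q ^ (2 * n + 1)

def seriesTerm (q u : ℝ) (n : ℕ) : ℝ :=
  (-1) ^ n * q ^ (n * (n + 1)) * (1 + q ^ (2 * n + 1)) * (1 - q ^ (2 * n + 1)) / denom q u n

/-- `∏_{j ≠ k} pfFactor q k j` is the coefficient of `1 / denom q u k` in the partial fraction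
expansion of `∏_j 1 / denom q u j` in `u`. -/
def pfFactor (q : ℝ) (k j : ℕ) : ℝ :=
  q ^ (2 * k + 1) / ((q ^ (2 * k + 1) - q ^ (2 * j + 1)) * (1 - q ^ (2 * k + 1) * q ^ (2 * j + 1)))

end

theorem one_sub_pow_pos {q : ℝ} (hq0 : 0 ≤ q) (hq1 : q < 1) {n : ℕ} (hn : n ≠ 0) :
    0 < 1 - q ^ n :=
  sub_pos.mpr (pow_lt_one₀ hq0 hq1 hn)

theorem multipliable_one_sub_pow {q : ℝ} (hq0 : 0 ≤ q) (hq1 : q < 1) {e : ℕ → ℕ}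
    (he : ∀ n, n ≤ e n) : Multipliable fun n => 1 - q ^ e n :=
  Real.multipliable_of_summable_sub_one (by simpa using (summable_pow_of_le hq0 hq1 he).neg)

theorem tprod_one_sub_pow_pos {q : ℝ} (hq0 : 0 ≤ q) (hq1 : q < 1) {e : ℕ → ℕ}
    (he : ∀ n, n < e n) : 0 < ∏' n, (1 - q ^ e n) :=
  Real.tprod_pos_of_summable_sub_one (fun n => one_sub_pow_pos hq0 hq1 (he n).ne_bot)
    (by simpa using (summable_pow_of_le hq0 hq1 fun n => (he n).le).neg)

theorem denom_pos {q u : ℝ} (hq0 : 0 ≤ q) (hq1 : q < 1) (hu : 0 ≤ u) (n : ℕ) :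
    0 < denom q u n := by
  have := one_sub_pow_pos hq0 hq1 (n := 2 * n + 1) (by omega)
  unfold denom
  positivity

theorem summable_denom_sub_one {q : ℝ} (hq0 : 0 ≤ q) (hq1 : q < 1) (u : ℝ) :
    Summable fun n => denom q u n - 1 := by
  have hx : Summable fun n => q ^ (2 * n + 1) := summable_pow_of_le hq0 hq1 fun n => by omega
  have hx2 : Summable fun n => (q ^ (2 * n + 1)) ^ 2 := by
    simpa only [← pow_mul] using summable_pow_of_le hq0 hq1 (e := fun n => (2 * n + 1) * 2)
      fun n => by omega
  convert hx2.add (hx.mul_left (u - 2)) using 2 with n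
  rw [denom]
  ring

theorem multipliable_denom {q : ℝ} (hq0 : 0 ≤ q) (hq1 : q < 1) (u : ℝ) :
    Multipliable (denom q u) :=
  Real.multipliable_of_summable_sub_one (summable_denom_sub_one hq0 hq1 u)

theorem tprod_denom_pos {q u : ℝ} (hq0 : 0 ≤ q) (hq1 : q < 1) (hu : 0 ≤ u) :
    0 < ∏' n, denom q u n :=
  Real.tprod_pos_of_summable_sub_one (denom_pos hq0 hq1 hu) (summable_denom_sub_one hq0 hq1 u)

theorem evenPoch_succ (q : ℝ) (M : ℕ) :
    evenPoch q (M + 1) = evenPoch q M * (1 - q ^ (2 * (M + 1))) :=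
  prod_range_succ _ _

theorem evenPoch_pos {q : ℝ} (hq0 : 0 ≤ q) (hq1 : q < 1) (M : ℕ) : 0 < evenPoch q M :=
  prod_pos fun _ _ => one_sub_pow_pos hq0 hq1 (by omega)

theorem tendsto_evenPoch {q : ℝ} (hq0 : 0 ≤ q) (hq1 : q < 1) :
    Tendsto (evenPoch q) atTop (𝓝 (∏' n : ℕ, (1 - q ^ (2 * (n + 1))))) :=
  (multipliable_one_sub_pow hq0 hq1 (e := fun n => 2 * (n + 1)) fun n => by omega).hasProd
    |>.tendsto_prod_nat

theorem tprod_le_evenPoch {q : ℝ} (hq0 : 0 ≤ q) (hq1 : q < 1) (M : ℕ) :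
    ∏' n : ℕ, (1 - q ^ (2 * (n + 1))) ≤ evenPoch q M :=
  (multipliable_one_sub_pow hq0 hq1 (e := fun n => 2 * (n + 1)) fun n => by omega).hasProd
    |>.le_prod_range (fun _ => (one_sub_pow_pos hq0 hq1 (by omega)).le)
      (fun _ => sub_le_self _ (by positivity)) M

theorem pfFactor_of_lt {q : ℝ} (hq : q ≠ 0) {j k : ℕ} (hjk : j < k) :
    pfFactor q k j =
      -q ^ (2 * (k - j)) / ((1 - q ^ (2 * (k - j))) * (1 - q ^ (2 * (k + j + 1)))) := by
  have hk : q ^ (2 * k + 1) = q ^ (2 * j + 1) * q ^ (2 * (k - j)) := by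
    rw [← pow_add]; congr 1; omega
  have hkj : q ^ (2 * (k + j + 1)) = q ^ (2 * j + 1) * q ^ (2 * (k - j)) * q ^ (2 * j + 1) := by
    rw [← pow_add, ← pow_add]; congr 1; omega
  have : q ^ (2 * j + 1) ≠ 0 := pow_ne_zero _ hq
  rw [pfFactor, hkj, hk, show q ^ (2 * j + 1) * q ^ (2 * (k - j)) - q ^ (2 * j + 1)
    = -(q ^ (2 * j + 1) * (1 - q ^ (2 * (k - j)))) by ring]
  field_simp

theorem pfFactor_of_gt {q : ℝ} (hq : q ≠ 0) {j k : ℕ} (hkj : k < j) :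
    pfFactor q k j = ((1 - q ^ (2 * (j - k))) * (1 - q ^ (2 * (j + k + 1))))⁻¹ := by
  have hj : q ^ (2 * j + 1) = q ^ (2 * k + 1) * q ^ (2 * (j - k)) := by
    rw [← pow_add]; congr 1; omega
  have hjk : q ^ (2 * (j + k + 1)) = q ^ (2 * k + 1) * (q ^ (2 * k + 1) * q ^ (2 * (j - k))) := by
    rw [← pow_add, ← pow_add]; congr 1; omega
  have : q ^ (2 * k + 1) ≠ 0 := pow_ne_zero _ hq
  rw [pfFactor, hjk, hj, show q ^ (2 * k + 1) - q ^ (2 * k + 1) * q ^ (2 * (j - k))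
    = q ^ (2 * k + 1) * (1 - q ^ (2 * (j - k))) by ring]
  field_simp

theorem prod_pow_two_mul_range_succ (q : ℝ) (k : ℕ) :
    ∏ j ∈ range k, q ^ (2 * (j + 1)) = q ^ (k * (k + 1)) := by
  induction k with
  | zero => simp
  | succ k ih => rw [prod_range_succ, ih, ← pow_add]; congr 1; ring

theorem prod_pfFactor_lt_mul_evenPoch {q : ℝ} (hq0 : 0 < q) (hq1 : q < 1) (k : ℕ) :
    (∏ j ∈ range k, pfFactor q k j) * evenPoch q (2 * k) = (-1) ^ k * q ^ (k * (k + 1)) := by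
  have hsplit :
      evenPoch q (2 * k) = evenPoch q k * ∏ j ∈ range k, (1 - q ^ (2 * (k + j + 1))) := by
    rw [evenPoch, two_mul, prod_range_add]; rfl
  have hP : ∏ j ∈ range k, (1 - q ^ (2 * (k - j))) = evenPoch q k :=
    prod_range_sub_eq_prod_range_succ (fun i => 1 - q ^ (2 * i)) k
  have hnum : ∏ j ∈ range k, -q ^ (2 * (k - j)) = (-1) ^ k * q ^ (k * (k + 1)) := by
    rw [prod_neg, card_range, prod_range_sub_eq_prod_range_succ (fun i => q ^ (2 * i)),
      prod_pow_two_mul_range_succ]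
  have hpos := evenPoch_pos hq0.le hq1 k
  have hpos' : 0 < ∏ j ∈ range k, (1 - q ^ (2 * (k + j + 1))) :=
    prod_pos fun _ _ => one_sub_pow_pos hq0.le hq1 (by omega)
  rw [prod_congr rfl fun j hj => pfFactor_of_lt hq0.ne' (mem_range.mp hj), prod_div_distrib,
    prod_mul_distrib, hP, hnum, hsplit]
  field_simp

theorem prod_pfFactor_gt_mul_evenPoch {q : ℝ} (hq0 : 0 < q) (hq1 : q < 1) {k N : ℕ}
    (hkN : k ≤ N) :
    (∏ j ∈ Ioc k N, pfFactor q k j) * (evenPoch q (N - k) * evenPoch q (N + k + 1)) =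
      evenPoch q (2 * k + 1) := by
  induction N, hkN using Nat.le_induction with
  | base => simp [evenPoch, two_mul]
  | succ N hkN ih =>
    rw [prod_Ioc_succ_top hkN, pfFactor_of_gt hq0.ne' (by omega), ← ih,
      show N + 1 - k = N - k + 1 by omega, show N + 1 + k + 1 = N + k + 1 + 1 by omega,
      evenPoch_succ, evenPoch_succ, show N - k + 1 = N + 1 - k by omega,
      show N + k + 1 + 1 = N + 1 + k + 1 by omega]
    have h1 := one_sub_pow_pos hq0.le hq1 (n := 2 * (N + 1 - k)) (by omega)
    have h2 := one_sub_pow_pos hq0.le hq1 (n := 2 * (N + 1 + k + 1)) (by omega)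
    field_simp

theorem prod_pfFactor_mul_evenPoch {q : ℝ} (hq0 : 0 < q) (hq1 : q < 1) {k N : ℕ} (hkN : k ≤ N) :
    (∏ j ∈ (range (N + 1)).erase k, pfFactor q k j) *
        (evenPoch q (N - k) * evenPoch q (N + k + 1)) =
      (-1) ^ k * q ^ (k * (k + 1)) * (1 - q ^ (2 * (2 * k + 1))) := by
  have hsplit : (range (N + 1)).erase k = range k ∪ Ioc k N := by
    ext j; simp only [mem_erase, mem_range, mem_union, mem_Ioc]; omega
  have hdisj : Disjoint (range k) (Ioc k N) :=
    disjoint_left.mpr fun j hj hj' => by simp only [mem_range, mem_Ioc] at hj hj'; omega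
  rw [hsplit, prod_union hdisj, mul_assoc, prod_pfFactor_gt_mul_evenPoch hq0 hq1 hkN,
    evenPoch_succ, ← mul_assoc, prod_pfFactor_lt_mul_evenPoch hq0 hq1]

theorem sum_seriesTerm_div_evenPoch {q u : ℝ} (hq0 : 0 < q) (hq1 : q < 1) (hu : 0 ≤ u) (N : ℕ) :
    ∑ k ∈ range (N + 1), seriesTerm q u k / (evenPoch q (N - k) * evenPoch q (N + k + 1)) =
      ∏ k ∈ range (N + 1), (denom q u k)⁻¹ := by
  have hxx : ∀ i ∈ range (N + 1), ∀ j ∈ range (N + 1), i ≠ j →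
      (q ^ (2 * i + 1) - q ^ (2 * j + 1)) * (1 - q ^ (2 * i + 1) * q ^ (2 * j + 1)) ≠ 0 := by
    intro i _ j _ hij
    refine mul_ne_zero (sub_ne_zero.mpr ((pow_right_injective₀ hq0 hq1.ne).ne (by omega))) ?_
    rw [← pow_add]
    exact (one_sub_pow_pos hq0.le hq1 (by omega)).ne'
  refine Eq.trans ?_ (prod_inv_one_sub_sq_add_mul (x := fun k => q ^ (2 * k + 1))
    nonempty_range_add_one u (fun i _ => by positivity)
    (fun i _ => (denom_pos hq0.le hq1 hu i).ne') hxx).symm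
  refine sum_congr rfl fun k hk => ?_
  have hPP : evenPoch q (N - k) * evenPoch q (N + k + 1) ≠ 0 :=
    (mul_pos (evenPoch_pos hq0.le hq1 _) (evenPoch_pos hq0.le hq1 _)).ne'
  have hcoeff := prod_pfFactor_mul_evenPoch hq0 hq1 (Nat.lt_succ_iff.mp (mem_range.mp hk))
  rw [← eq_div_iff hPP] at hcoeff
  change _ = (∏ j ∈ (range (N + 1)).erase k, pfFactor q k j) / denom q u k
  rw [hcoeff, seriesTerm, div_div, div_div, mul_comm (denom q u k)]
  ring

theorem abs_seriesTerm_le {q u : ℝ} (hq0 : 0 ≤ q) (hq1 : q < 1) (hu : 0 ≤ u) (n : ℕ) :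
    |seriesTerm q u n| ≤ 2 / (1 - q) * q ^ (n * (n + 1)) := by
  have hx0 : 0 ≤ q ^ (2 * n + 1) := by positivity
  have hxq : q ^ (2 * n + 1) ≤ q := pow_le_of_le_one hq0 hq1.le (by omega)
  have hD := denom_pos hq0 hq1 hu n
  have hratio : (1 + q ^ (2 * n + 1)) * (1 - q ^ (2 * n + 1)) / denom q u n ≤ 2 / (1 - q) := by
    rw [div_le_div_iff₀ hD (by linarith), denom]
    nlinarith [mul_nonneg hu hx0]
  have hterm : seriesTerm q u n = (-1) ^ n *
      (q ^ (n * (n + 1)) * ((1 + q ^ (2 * n + 1)) * (1 - q ^ (2 * n + 1)) / denom q u n)) := by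
    rw [seriesTerm]; ring
  calc |seriesTerm q u n|
      = q ^ (n * (n + 1)) * ((1 + q ^ (2 * n + 1)) * (1 - q ^ (2 * n + 1)) / denom q u n) := by
        rw [hterm, abs_mul, abs_pow, abs_neg, abs_one, one_pow, one_mul, abs_of_nonneg]
        exact mul_nonneg (by positivity) (div_nonneg (mul_nonneg (by linarith) (by linarith)) hD.le)
    _ ≤ q ^ (n * (n + 1)) * (2 / (1 - q)) := by gcongr
    _ = 2 / (1 - q) * q ^ (n * (n + 1)) := mul_comm _ _

theorem summable_seriesTerm {q u : ℝ} (hq0 : 0 ≤ q) (hq1 : q < 1) (hu : 0 ≤ u) :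
    Summable (seriesTerm q u) :=
  Summable.of_norm_bounded ((summable_pow_of_le hq0 hq1 fun n => Nat.le_mul_of_pos_right n
    n.succ_pos).mul_left _) (abs_seriesTerm_le hq0 hq1 hu)

theorem hasSum_seriesTerm {q u : ℝ} (hq0 : 0 < q) (hq1 : q < 1) (hu : 0 ≤ u) :
    HasSum (seriesTerm q u) ((∏' n : ℕ, (1 - q ^ (2 * (n + 1)))) ^ 2 / ∏' n, denom q u n) := by
  set E := ∏' n : ℕ, (1 - q ^ (2 * (n + 1)))
  set Δ := ∏' n, denom q u n
  have hEpos : 0 < E := tprod_one_sub_pow_pos hq0.le hq1 fun n => by omega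
  have hΔpos : 0 < Δ := tprod_denom_pos hq0.le hq1 hu
  set G : ℕ → ℕ → ℝ := fun N k =>
    if k ≤ N then seriesTerm q u k / (evenPoch q (N - k) * evenPoch q (N + k + 1)) else 0
  have hlim : ∀ k, Tendsto (G · k) atTop (𝓝 (seriesTerm q u k / (E * E))) := by
    intro k
    have h1 := (tendsto_evenPoch hq0.le hq1).comp (tendsto_sub_atTop_nat k)
    have h2 := (tendsto_evenPoch hq0.le hq1).comp (tendsto_add_atTop_nat (k + 1))
    refine (tendsto_const_nhds.div (h1.mul h2) (mul_pos hEpos hEpos).ne').congr' ?_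
    filter_upwards [eventually_ge_atTop k] with N hN
    simp only [G, if_pos hN]
    rfl
  have hbound : ∀ N k, ‖G N k‖ ≤ |seriesTerm q u k| / (E * E) := by
    intro N k
    simp only [G]
    split_ifs
    · rw [Real.norm_eq_abs, abs_div, abs_of_pos (mul_pos (evenPoch_pos hq0.le hq1 _)
        (evenPoch_pos hq0.le hq1 _))]
      exact div_le_div_of_nonneg_left (abs_nonneg _) (mul_pos hEpos hEpos)
        (mul_le_mul (tprod_le_evenPoch hq0.le hq1 _) (tprod_le_evenPoch hq0.le hq1 _) hEpos.le
          (evenPoch_pos hq0.le hq1 _).le)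
    · rw [norm_zero]; positivity
  have hfin : ∀ N, ∑' k, G N k = ∏ k ∈ range (N + 1), (denom q u k)⁻¹ := by
    intro N
    rw [tsum_eq_sum (s := range (N + 1)) fun k hk => if_neg (by simpa using hk),
      ← sum_seriesTerm_div_evenPoch hq0 hq1 hu N]
    exact sum_congr rfl fun k hk => if_pos (Nat.lt_succ_iff.mp (mem_range.mp hk))
  have hval : ∑' k, seriesTerm q u k / (E * E) = Δ⁻¹ :=
    tendsto_nhds_unique ((tendsto_tsum_of_dominated_convergence
      ((summable_seriesTerm hq0.le hq1 hu).abs.div_const _) hlim (.of_forall hbound)).congr hfin)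
      (((multipliable_denom hq0.le hq1 u).hasProd.inv₀ hΔpos.ne').tendsto_prod_nat.comp
        (tendsto_add_atTop_nat 1))
  rw [tsum_div_const, div_eq_iff (by positivity)] at hval
  convert (summable_seriesTerm hq0.le hq1 hu).hasSum using 1
  rw [hval]
  field_simp

end RamanujanPsi

open RamanujanPsi in
theorem stmt11 (q : ℝ) (hq0 : 0 < q) (hq1 : q < 1) (t : ℝ) :
    Multipliable (fun n : ℕ =>
      (1 - q ^ (2 * n + 1)) ^ 2 / ((1 - q ^ (2 * n + 1)) ^ 2 + t ^ 2 * q ^ (2 * n + 1))) ∧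
    HasSum
      (fun n : ℕ =>
        (-1 : ℝ) ^ n * q ^ (n * (n + 1)) * (1 + q ^ (2 * n + 1)) * (1 - q ^ (2 * n + 1)) /
          ((1 - q ^ (2 * n + 1)) ^ 2 + t ^ 2 * q ^ (2 * n + 1)))
      (psi q ^ 2 *
        ∏' n : ℕ,
          (1 - q ^ (2 * n + 1)) ^ 2 / ((1 - q ^ (2 * n + 1)) ^ 2 + t ^ 2 * q ^ (2 * n + 1))) := by
  show Multipliable (fun n => (1 - q ^ (2 * n + 1)) ^ 2 / denom q (t ^ 2) n) ∧
    HasSum (seriesTerm q (t ^ 2)) (psi q ^ 2 * ∏' n, (1 - q ^ (2 * n + 1)) ^ 2 / denom q (t ^ 2) n)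
  have hOdd := multipliable_one_sub_pow hq0.le hq1 (e := fun n => 2 * n + 1) fun n => by omega
  have hEven := multipliable_one_sub_pow hq0.le hq1 (e := fun n => 2 * (n + 1)) fun n => by omega
  have hOddPos := tprod_one_sub_pow_pos hq0.le hq1 (e := fun n => 2 * n + 1) fun n => by omega
  have hDenomPos := tprod_denom_pos hq0.le hq1 (sq_nonneg t)
  have hpsi : psi q = (∏' n : ℕ, (1 - q ^ (2 * (n + 1)))) / ∏' n : ℕ, (1 - q ^ (2 * n + 1)) :=
    (hEven.hasProd.div₀ hOdd.hasProd hOddPos.ne').tprod_eq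
  have hprod := (hOdd.hasProd.pow 2).div₀ (multipliable_denom hq0.le hq1 (t ^ 2)).hasProd
    hDenomPos.ne'
  refine ⟨hprod.multipliable, ?_⟩
  rw [hprod.tprod_eq, hpsi]
  convert hasSum_seriesTerm hq0 hq1 (sq_nonneg t) using 1
  field_simp
end

section
/- For every real q with 0 < q < 1 and every odd positive integer N, the infinite product ∏_{m odd, m ≥ 1, m ≠ N} (1−q^m)^2 / ((1−q^{m−N})(1−q^{m+N})) converges and ψ(q)^2 · ((1−q^N)^2/q^N) · ∏_{m odd, m ≥ 1, m ≠ N} (1−q^m)^2/((1−q^{m−N})(1−q^{m+N})) = (−1)^{(N−1)/2} q^{(N^2−1)/4 − N} (1−q^{2N}). -/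
/-!
Put `N = 2k + 1`, `m = 2n + 1`, `A = ∏ (1 - q^{2n+2})` and `B = ∏ (1 - q^{2n+1})`, so that
`ψ = A / B`. Over `n ≠ k` the product splits into three products of the same shape. The numerators
give `B² / (1 - q^N)²`. The factors `1 - q^{m+N} = 1 - q^{2(n+k)+2}` are `A` without its first `k`
factors and without `1 - q^{2N}`. The factors `1 - q^{m-N} = 1 - q^{2(n-k)}` give all of `A` for
`n > k`, and for `n < k` they are `1 - q^{-2j} = (1 - q^{2j}) / (-q^{2j})` with `1 ≤ j ≤ k`.
The two copies of `∏_{j=1}^{k} (1 - q^{2j})` cancel, leaving `(-1)^k q^{k(k+1)}`.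
-/

open scoped BigOperators

open Finset

section InfiniteProducts

variable {K : Type*} [CommGroupWithZero K] [TopologicalSpace K] [SeparatelyContinuousMul K]
  {α : Type*} {f : α → K} {a : K}

theorem HasProd.mulIndicator_compl_singleton (hf : HasProd f a) {k : α} (hk : f k ≠ 0) :
    HasProd (({k}ᶜ : Set α).mulIndicator f) (a / f k) := by
  classical
  convert hf.congr_cofinite₀ (g := ({k}ᶜ : Set α).mulIndicator f) (s := {k}) (by simpa using hk)
    (fun i hi => by simp_all) using 1
  simp [div_eq_mul_inv]

theorem HasProd.nat_add₀ {f : ℕ → K} (hf : HasProd f a) (k : ℕ) (hk : ∀ i < k, f i ≠ 0) :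
    HasProd (fun n => f (n + k)) (a / ∏ i ∈ range k, f i) := by
  classical
  have h := hf.congr_cofinite₀ (g := fun n => if n < k then 1 else f n) (s := range k)
    (fun i hi => hk i (mem_range.1 hi)) (fun i hi => by simp_all)
  rw [prod_congr rfl fun i hi => if_pos (mem_range.1 hi), prod_const_one, one_div,
    ← div_eq_mul_inv] at h
  have hshift := (add_left_injective k).hasProd_iff (f := fun n => if n < k then 1 else f n)
    (a := a / ∏ i ∈ range k, f i) fun n hn => if_pos <| by
      by_contra h'
      exact hn ⟨n - k, Nat.sub_add_cancel (not_lt.1 h')⟩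
  simpa [Function.comp_def] using hshift.2 h

end InfiniteProducts

section NormedField

variable {K : Type*} [NormedField K] {q : K}

theorem one_sub_pow_ne_zero (hq : ‖q‖ < 1) {m : ℕ} (hm : m ≠ 0) : 1 - q ^ m ≠ 0 := by
  rw [sub_ne_zero]
  intro h
  have := congrArg norm h
  rw [norm_one, norm_pow] at this
  exact (pow_lt_one₀ (norm_nonneg q) hq hm).ne' this

theorem summable_norm_pow_two_mul_add (hq : ‖q‖ < 1) (c : ℕ) :
    Summable fun n : ℕ => ‖q ^ (2 * n + c)‖ := by
  simp_rw [norm_pow, pow_add, pow_mul]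
  exact (summable_geometric_of_lt_one (by positivity)
    (pow_lt_one₀ (norm_nonneg q) hq two_ne_zero)).mul_right _

variable [CompleteSpace K]

theorem multipliable_one_sub_pow_two_mul_add (hq : ‖q‖ < 1) (c : ℕ) :
    Multipliable fun n : ℕ => 1 - q ^ (2 * n + c) := by
  simpa [sub_eq_add_neg] using
    multipliable_one_add_of_summable (f := fun n : ℕ => -q ^ (2 * n + c))
    (by simpa using summable_norm_pow_two_mul_add hq c)

theorem tprod_one_sub_pow_two_mul_add_ne_zero (hq : ‖q‖ < 1) {c : ℕ} (hc : c ≠ 0) :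
    ∏' n : ℕ, (1 - q ^ (2 * n + c)) ≠ 0 := by
  simpa [sub_eq_add_neg] using tprod_one_add_ne_zero_of_summable
    (f := fun n : ℕ => -q ^ (2 * n + c))
    (fun n => by simpa [sub_eq_add_neg] using one_sub_pow_ne_zero hq (m := 2 * n + c) (by omega))
    (by simpa using summable_norm_pow_two_mul_add hq c)

end NormedField

section Field

variable {F : Type*} [Field F] {q : F}

theorem prod_range_one_sub_zpow_neg (hq0 : q ≠ 0) (k : ℕ) :
    ∏ i ∈ range k, (1 - q ^ (-(2 * (i : ℤ) + 2))) =
      (∏ i ∈ range k, (1 - q ^ (2 * i + 2))) / ((-1) ^ k * q ^ (k * (k + 1))) := by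
  induction k with
  | zero => simp
  | succ k ih =>
    rw [prod_range_succ, prod_range_succ, ih, show -(2 * (k : ℤ) + 2) = -((2 * k + 2 : ℕ) : ℤ) by
      push_cast; ring, zpow_neg, zpow_natCast]
    field_simp
    ring

end Field

section Residue

variable {K : Type*} [NormedField K] [CompleteSpace K] {q : K}

noncomputable def oddProd (q : K) : K := ∏' n : ℕ, (1 - q ^ (2 * n + 1))

noncomputable def evenProd (q : K) : K := ∏' n : ℕ, (1 - q ^ (2 * n + 2))

theorem hasProd_mulIndicator_one_sub_pow_odd_sq (hq : ‖q‖ < 1) (k : ℕ) :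
    HasProd (({k}ᶜ : Set ℕ).mulIndicator fun n => (1 - q ^ (2 * n + 1)) ^ 2)
      (oddProd q ^ 2 / (1 - q ^ (2 * k + 1)) ^ 2) :=
  ((multipliable_one_sub_pow_two_mul_add hq 1).hasProd.pow 2).mulIndicator_compl_singleton
    (pow_ne_zero 2 (one_sub_pow_ne_zero hq (by omega)))

theorem hasProd_mulIndicator_one_sub_zpow_add (hq : ‖q‖ < 1) (k : ℕ) :
    HasProd (({k}ᶜ : Set ℕ).mulIndicator
        fun n : ℕ => 1 - q ^ ((2 * (n : ℤ) + 1) + ((2 * k + 1 : ℕ) : ℤ)))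
      (evenProd q / (∏ i ∈ range k, (1 - q ^ (2 * i + 2))) / (1 - q ^ (4 * k + 2))) := by
  have hfun : (fun n : ℕ => 1 - q ^ ((2 * (n : ℤ) + 1) + ((2 * k + 1 : ℕ) : ℤ))) =
      fun n => 1 - q ^ (2 * (n + k) + 2) := by
    funext n
    rw [← zpow_natCast]
    push_cast
    ring_nf
  rw [hfun, show 4 * k + 2 = 2 * (k + k) + 2 by ring]
  exact ((multipliable_one_sub_pow_two_mul_add hq 2).hasProd.nat_add₀ k
    fun i _ => one_sub_pow_ne_zero hq (by omega)).mulIndicator_compl_singleton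
    (one_sub_pow_ne_zero hq (by omega))

theorem hasProd_mulIndicator_one_sub_zpow_sub (hq : ‖q‖ < 1) (hq0 : q ≠ 0) (k : ℕ) :
    HasProd (({k}ᶜ : Set ℕ).mulIndicator
        fun n : ℕ => 1 - q ^ ((2 * (n : ℤ) + 1) - ((2 * k + 1 : ℕ) : ℤ)))
      ((∏ i ∈ range k, (1 - q ^ (2 * i + 2))) / ((-1) ^ k * q ^ (k * (k + 1))) * evenProd q) := by
  set D := ({k}ᶜ : Set ℕ).mulIndicator
    fun n : ℕ => 1 - q ^ ((2 * (n : ℤ) + 1) - ((2 * k + 1 : ℕ) : ℤ)) with hD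
  have htail : HasProd (fun n => D (n + (k + 1))) (evenProd q) := by
    have hfun : (fun n => D (n + (k + 1))) = fun n => 1 - q ^ (2 * n + 2) := by
      funext n
      rw [hD, Set.mulIndicator_of_mem (by simp; omega), ← zpow_natCast]
      push_cast
      ring_nf
    rw [hfun]
    exact (multipliable_one_sub_pow_two_mul_add hq 2).hasProd
  have hhead : ∏ i ∈ range (k + 1), D i =
      (∏ i ∈ range k, (1 - q ^ (2 * i + 2))) / ((-1) ^ k * q ^ (k * (k + 1))) := by
    rw [prod_range_succ, hD, Set.mulIndicator_of_notMem (by simp), mul_one,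
      ← prod_range_one_sub_zpow_neg hq0, ← prod_range_reflect]
    refine prod_congr rfl fun i hi => ?_
    have hi : i < k := mem_range.1 hi
    rw [Set.mulIndicator_of_mem (by simp; omega)]
    congr 2
    omega
  simpa [hhead] using htail.prod_range_mul

noncomputable def residueTerm (q : K) (N n : ℕ) : K :=
  (1 - q ^ (2 * n + 1)) ^ 2 /
    ((1 - q ^ ((2 * (n : ℤ) + 1) - N)) * (1 - q ^ ((2 * (n : ℤ) + 1) + N)))

theorem hasProd_mulIndicator_residueTerm (hq : ‖q‖ < 1) (hq0 : q ≠ 0) (k : ℕ) :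
    HasProd (({k}ᶜ : Set ℕ).mulIndicator (residueTerm q (2 * k + 1)))
      ((-1) ^ k * q ^ (k * (k + 1)) * (1 - q ^ (4 * k + 2)) * oddProd q ^ 2 /
        ((1 - q ^ (2 * k + 1)) ^ 2 * evenProd q ^ 2)) := by
  have hE : ∏ i ∈ range k, (1 - q ^ (2 * i + 2)) ≠ 0 :=
    prod_ne_zero_iff.2 fun i _ => one_sub_pow_ne_zero hq (by omega)
  have hA : evenProd q ≠ 0 := tprod_one_sub_pow_two_mul_add_ne_zero hq two_ne_zero
  have hN : 1 - q ^ (2 * k + 1) ≠ 0 := one_sub_pow_ne_zero hq (by omega)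
  have h2N : 1 - q ^ (4 * k + 2) ≠ 0 := one_sub_pow_ne_zero hq (by omega)
  convert (hasProd_mulIndicator_one_sub_pow_odd_sq hq k).div₀
    ((hasProd_mulIndicator_one_sub_zpow_sub hq hq0 k).mul
      (hasProd_mulIndicator_one_sub_zpow_add hq k)) (by simp [hE, hA, hq0, h2N]) using 1
  · rfl
  · funext n
    by_cases hn : n = k <;> simp [hn, residueTerm]
  · field_simp

end Residue

theorem psi_eq_evenProd_div_oddProd {q : ℝ} (hq : ‖q‖ < 1) : psi q = evenProd q / oddProd q := by
  simp_rw [psi, show ∀ n : ℕ, 2 * (n + 1) = 2 * n + 2 from fun n => by ring]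
  exact ((multipliable_one_sub_pow_two_mul_add hq 2).hasProd.div₀
    (multipliable_one_sub_pow_two_mul_add hq 1).hasProd
    (tprod_one_sub_pow_two_mul_add_ne_zero hq one_ne_zero)).tprod_eq

/-- the residue computation. The product over odd `m ≠ N` (odd `m`
parametrised as `m = 2n+1` with `2n+1 ≠ N`) of
`(1−q^m)² / ((1−q^{m−N})(1−q^{m+N}))` converges, and
`ψ(q)² ((1−q^N)²/q^N) ∏ = (−1)^{(N−1)/2} q^{(N²−1)/4 − N} (1−q^{2N})`. -/
theorem stmt12 (q : ℝ) (hq0 : 0 < q) (hq1 : q < 1) (N : ℕ) (hN : Odd N) :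
    Multipliable (fun n : {n : ℕ // 2 * n + 1 ≠ N} =>
      (1 - q ^ (2 * (n : ℕ) + 1)) ^ 2 /
        ((1 - q ^ ((2 * ((n : ℕ) : ℤ) + 1) - (N : ℤ))) *
         (1 - q ^ ((2 * ((n : ℕ) : ℤ) + 1) + (N : ℤ))))) ∧
    psi q ^ 2 * ((1 - q ^ N) ^ 2 / q ^ N) *
        ∏' n : {n : ℕ // 2 * n + 1 ≠ N},
          (1 - q ^ (2 * (n : ℕ) + 1)) ^ 2 /
            ((1 - q ^ ((2 * ((n : ℕ) : ℤ) + 1) - (N : ℤ))) *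
             (1 - q ^ ((2 * ((n : ℕ) : ℤ) + 1) + (N : ℤ)))) =
      (-1 : ℝ) ^ ((N - 1) / 2) * q ^ ((((N ^ 2 - 1) / 4 : ℕ) : ℤ) - (N : ℤ)) *
        (1 - q ^ (2 * N)) := by
  obtain ⟨k, rfl⟩ := hN
  have hq : ‖q‖ < 1 := by rwa [Real.norm_eq_abs, abs_of_pos hq0]
  have hprod := hasProd_mulIndicator_residueTerm hq hq0.ne' k
  rw [show ({k}ᶜ : Set ℕ) = {n | 2 * n + 1 ≠ 2 * k + 1} by ext; simp,
    ← hasProd_subtype_iff_mulIndicator] at hprod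
  refine ⟨hprod.multipliable, ?_⟩
  rw [show (2 * k + 1 - 1) / 2 = k by omega,
    show ((2 * k + 1) ^ 2 - 1) / 4 = k * (k + 1) by
      have : (2 * k + 1) ^ 2 = 4 * (k * (k + 1)) + 1 := by ring
      omega]
  erw [hprod.tprod_eq]
  rw [psi_eq_evenProd_div_oddProd hq, zpow_sub₀ hq0.ne', zpow_natCast, zpow_natCast,
    show 2 * (2 * k + 1) = 4 * k + 2 by ring]
  have hA : evenProd q ≠ 0 := tprod_one_sub_pow_two_mul_add_ne_zero hq two_ne_zero
  have hB : oddProd q ≠ 0 := tprod_one_sub_pow_two_mul_add_ne_zero hq one_ne_zero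
  have hN : 1 - q ^ (2 * k + 1) ≠ 0 := one_sub_pow_ne_zero hq (by omega)
  field_simp
end

section
/- For every real q with 0 < q < 1 and every real t with |t| < 1−q, one has ∏_{m odd, m ≥ 1} (1−q^m)^2/((1−q^m)^2 + t^2 q^m) = exp( ∑_{k=1}^∞ (−1)^k ζ_q^odd(2k) t^{2k}/k ), where both the infinite product and the exponentiated series converge. -/
open scoped BigOperators

/-- The odd q-zeta value `ζ_q^odd(2k) = ∑_{m odd} q^{mk}/(1-q^m)^{2k}`. -/
noncomputable def qZetaOdd (q : ℝ) (k : ℕ) : ℝ :=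
  ∑' n : ℕ, q ^ ((2 * n + 1) * k) / (1 - q ^ (2 * n + 1)) ^ (2 * k)

/-!
Write the `n`-th factor as `(1 - x n)⁻¹` with `x n = -t² qᵐ / (1 - qᵐ)²`, `m = 2n + 1`.
Since `|t| < 1 - q ≤ 1 - qᵐ`, we have `|x n| ≤ qᵐ ≤ q`, so the double series
`∑ₖ ∑ₙ x n ^ k / k` converges absolutely and may be summed in either order. Summing over `k`
first gives `∑ₙ -log (1 - x n)`, the logarithm of the product; summing over `n` first gives
the power sums `∑ₙ x n ^ k = (-1)ᵏ t²ᵏ ζ_q^odd(2k)`.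
-/

open Real

section PowerSums

variable {ι : Type*} {x : ι → ℝ} {r : ℝ}

theorem summable_pow_succ_div_of_abs_le (hx : Summable x) (hr0 : 0 ≤ r) (hr1 : r < 1)
    (hxr : ∀ i, |x i| ≤ r) :
    Summable (fun p : ℕ × ι => x p.2 ^ (p.1 + 1) / (p.1 + 1)) := by
  have hbound : Summable (fun p : ℕ × ι => r ^ p.1 * |x p.2|) :=
    (summable_geometric_of_lt_one hr0 hr1).mul_of_nonneg hx.abs
      (fun k => pow_nonneg hr0 k) (fun i => abs_nonneg _)
  refine hbound.of_norm_bounded fun ⟨k, i⟩ => ?_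
  calc ‖x i ^ (k + 1) / (k + 1)‖ = |x i| ^ k * |x i| / (k + 1) := by
        rw [norm_eq_abs, abs_div, abs_pow, pow_succ, abs_of_pos (by positivity : (0 : ℝ) < k + 1)]
    _ ≤ |x i| ^ k * |x i| := div_le_self (by positivity) (by simp)
    _ ≤ r ^ k * |x i| := by gcongr; exact hxr i

theorem hasSum_tsum_pow_succ_div (hx : Summable x) (hr0 : 0 ≤ r) (hr1 : r < 1)
    (hxr : ∀ i, |x i| ≤ r) :
    HasSum (fun k : ℕ => ∑' i, x i ^ (k + 1) / (k + 1)) (∑' i, -log (1 - x i)) := by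
  have hF := summable_pow_succ_div_of_abs_le hx hr0 hr1 hxr
  have hlog : HasSum (fun i => -log (1 - x i)) (∑' p : ι × ℕ, x p.1 ^ (p.2 + 1) / (p.2 + 1)) :=
    hF.prod_symm.hasSum.prod_fiberwise
      fun i => hasSum_pow_div_log_of_abs_lt_one ((hxr i).trans_lt hr1)
  rw [hlog.tsum_eq, ← (Equiv.prodComm ℕ ι).tsum_eq]
  exact hF.hasSum.prod_fiberwise fun k => (hF.prod_factor k).hasSum

theorem tprod_inv_one_sub_eq_exp_tsum (hx : Summable x) (hr0 : 0 ≤ r) (hr1 : r < 1)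
    (hxr : ∀ i, |x i| ≤ r) :
    Multipliable (fun i => (1 - x i)⁻¹) ∧
      ∏' i, (1 - x i)⁻¹ = exp (∑' k : ℕ, ∑' i, x i ^ (k + 1) / (k + 1)) := by
  have hpos : ∀ i, 0 < (1 - x i)⁻¹ :=
    fun i => inv_pos.2 (sub_pos.2 ((le_abs_self _).trans_lt ((hxr i).trans_lt hr1)))
  have hlog : ∀ i, log (1 - x i)⁻¹ = -log (1 + -x i) := by
    intro i; rw [log_inv, ← sub_eq_add_neg]
  have hsum : Summable (fun i => log (1 - x i)⁻¹) := by
    simpa only [hlog] using (summable_log_one_add_of_summable hx.neg).neg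
  refine ⟨multipliable_of_summable_log hpos hsum, ?_⟩
  rw [(hasSum_tsum_pow_succ_div hx hr0 hr1 hxr).tsum_eq, ← rexp_tsum_eq_tprod hpos hsum]
  simp only [log_inv]

end PowerSums

theorem sq_mul_div_one_sub_sq_le {t y : ℝ} (hy : 0 ≤ y) (ht : |t| ≤ 1 - y) :
    t ^ 2 * y / (1 - y) ^ 2 ≤ y := by
  have ht2 : t ^ 2 ≤ (1 - y) ^ 2 := by
    simpa only [sq_abs] using pow_le_pow_left₀ (abs_nonneg t) ht 2
  exact div_le_of_le_mul₀ (sq_nonneg _) hy (by nlinarith)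

theorem one_sub_sq_div_eq_inv {t y : ℝ} (hy : y ≠ 1) :
    (1 - y) ^ 2 / ((1 - y) ^ 2 + t ^ 2 * y) = (1 - -(t ^ 2 * y / (1 - y) ^ 2))⁻¹ := by
  have : (1 - y) ^ 2 ≠ 0 := pow_ne_zero 2 (sub_ne_zero.2 hy.symm)
  field_simp
  ring

theorem neg_sq_mul_div_one_sub_sq_pow (t y : ℝ) (k : ℕ) :
    (-(t ^ 2 * y / (1 - y) ^ 2)) ^ k = (-1) ^ k * t ^ (2 * k) * (y ^ k / (1 - y) ^ (2 * k)) := by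
  rw [neg_pow, div_pow, mul_pow, ← pow_mul, ← pow_mul, mul_div_assoc, mul_assoc]

theorem summable_pow_two_mul_add_one {q : ℝ} (hq0 : 0 ≤ q) (hq1 : q < 1) :
    Summable (fun n : ℕ => q ^ (2 * n + 1)) := by
  simpa only [pow_succ, pow_mul] using
    (summable_geometric_of_lt_one (sq_nonneg q) (by nlinarith)).mul_right q

theorem stmt13 (q : ℝ) (hq0 : 0 < q) (hq1 : q < 1) (t : ℝ) (ht : |t| < 1 - q) :
    Multipliable (fun n : ℕ =>
      (1 - q ^ (2 * n + 1)) ^ 2 / ((1 - q ^ (2 * n + 1)) ^ 2 + t ^ 2 * q ^ (2 * n + 1))) ∧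
    Summable (fun k : ℕ =>
      (-1 : ℝ) ^ (k + 1) * qZetaOdd q (k + 1) * t ^ (2 * (k + 1)) / (k + 1)) ∧
    (∏' n : ℕ,
        (1 - q ^ (2 * n + 1)) ^ 2 / ((1 - q ^ (2 * n + 1)) ^ 2 + t ^ 2 * q ^ (2 * n + 1))) =
      Real.exp (∑' k : ℕ,
        (-1 : ℝ) ^ (k + 1) * qZetaOdd q (k + 1) * t ^ (2 * (k + 1)) / (k + 1)) := by
  set x : ℕ → ℝ := fun n => -(t ^ 2 * q ^ (2 * n + 1) / (1 - q ^ (2 * n + 1)) ^ 2)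
  have hqm : ∀ n : ℕ, q ^ (2 * n + 1) ≤ q := fun n => pow_le_of_le_one hq0.le hq1.le (by omega)
  have hxq : ∀ n, |x n| ≤ q ^ (2 * n + 1) := fun n => by
    rw [abs_neg, abs_of_nonneg (by positivity)]
    exact sq_mul_div_one_sub_sq_le (by positivity) (by linarith [hqm n])
  have hx : Summable x := (summable_pow_two_mul_add_one hq0.le hq1).of_norm_bounded hxq
  have hxr : ∀ n, |x n| ≤ q := fun n => (hxq n).trans (hqm n)
  have hfactor : (fun n : ℕ =>
      (1 - q ^ (2 * n + 1)) ^ 2 / ((1 - q ^ (2 * n + 1)) ^ 2 + t ^ 2 * q ^ (2 * n + 1))) =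
      fun n => (1 - x n)⁻¹ :=
    funext fun n => one_sub_sq_div_eq_inv ((hqm n).trans_lt hq1).ne
  have hterm : (fun k : ℕ =>
      (-1 : ℝ) ^ (k + 1) * qZetaOdd q (k + 1) * t ^ (2 * (k + 1)) / (k + 1)) =
      fun k : ℕ => ∑' n, x n ^ (k + 1) / (k + 1) := by
    funext k
    simp only [x, neg_sq_mul_div_one_sub_sq_pow, ← pow_mul, tsum_div_const, tsum_mul_left,
      qZetaOdd]
    ring
  obtain ⟨hmul, hprod⟩ := tprod_inv_one_sub_eq_exp_tsum hx hq0.le hq1 hxr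
  rw [hfactor, hterm]
  exact ⟨hmul, (hasSum_tsum_pow_succ_div hx hq0.le hq1 hxr).summable, hprod⟩
end

section
/- The Ramanujan theta function satisfies lim_{q→1⁻} (1−q) ψ(q)^2 = π/2. -/
open scoped BigOperators Topology
open Real

/-!
A q-analogue of Wallis' product. With the q-integers `[k] = 1 + q + ⋯ + q^(k-1)` (`qNat q k`),
the factors of `ψ` are `[2n+2]/[2n+1]`, and the square of the `N`-th partial product telescopes
to `[2N+1] · ∏_{n<N} a_n(q)` with `a_n(q) = [2n+2]² / ([2n+1][2n+3])` (`qWallisFactor q n`).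
Since `(1 - q)[2N+1] → 1`, this gives `(1 - q) ψ(q)² = ∏_n a_n(q)`. The identity
`[k+1]² - [k][k+2] = q^k` and the AM-GM bound `(k+1)² q^k ≤ [k+1]²` give `1 ≤ a_n(q) ≤ a_n(1)`,
and `a_n(1)` is the `n`-th Wallis factor. Hence `∏_{n<N} a_n(q) ≤ (1 - q) ψ(q)² ≤ π/2` for all
`N`, and as `q → 1⁻` the left-hand side tends to the `N`-th Wallis partial product, which is as
close to `π/2` as we like.
-/

open Filter Finset

section QNat

variable {R : Type*}

def qNat [Semiring R] (q : R) (k : ℕ) : R := ∑ i ∈ range k, q ^ i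

lemma qNat_succ [Semiring R] (q : R) (k : ℕ) : qNat q (k + 1) = q * qNat q k + 1 :=
  geom_sum_succ

lemma qNat_succ' [Semiring R] (q : R) (k : ℕ) : qNat q (k + 1) = qNat q k + q ^ k :=
  sum_range_succ _ _

lemma qNat_one_left [Semiring R] (k : ℕ) : qNat (1 : R) k = k :=
  one_geom_sum k

lemma one_sub_mul_qNat [CommRing R] (q : R) (k : ℕ) : (1 - q) * qNat q k = 1 - q ^ k :=
  mul_neg_geom_sum q k

lemma qNat_succ_sq_sub_mul [CommRing R] (q : R) (k : ℕ) :
    qNat q (k + 1) ^ 2 - qNat q k * qNat q (k + 2) = q ^ k := by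
  rw [qNat_succ q (k + 1), qNat_succ q k]
  linear_combination (-1 : R) * one_sub_mul_qNat q k

lemma qNat_pos [Semiring R] [PartialOrder R] [IsStrictOrderedRing R] {q : R}
    (hq : 0 ≤ q) {k : ℕ} (hk : k ≠ 0) : 0 < qNat q k :=
  geom_sum_pos hq hk

lemma one_le_qNat [Semiring R] [PartialOrder R] [IsOrderedRing R] {q : R} (hq : 0 ≤ q) (k : ℕ) :
    1 ≤ qNat q (k + 1) := by
  rw [qNat_succ]
  exact le_add_of_nonneg_left (mul_nonneg hq (sum_nonneg fun i _ => pow_nonneg hq i))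

lemma continuous_qNat (k : ℕ) : Continuous fun q : ℝ => qNat q k := by
  unfold qNat
  fun_prop

/-- AM-GM for the pairs `q^i, q^(k-i)`, as Cauchy–Schwarz for `(r^i)`, `(r^(k-i))` with `r = √q`. -/
lemma sq_mul_pow_le_qNat_sq {q : ℝ} (hq : 0 ≤ q) (k : ℕ) :
    ((k : ℝ) + 1) ^ 2 * q ^ k ≤ qNat q (k + 1) ^ 2 := by
  obtain ⟨r, rfl⟩ : ∃ r, q = r ^ 2 := ⟨√q, (sq_sqrt hq).symm⟩
  have hcs := sum_mul_sq_le_sq_mul_sq (range (k + 1)) (r ^ ·) (fun i => r ^ (k - i))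
  have hlhs : ∑ i ∈ range (k + 1), r ^ i * r ^ (k - i) = (k + 1) * r ^ k := by
    simpa using geom_sum₂_self r (k + 1)
  have hleft : ∑ i ∈ range (k + 1), (r ^ i) ^ 2 = qNat (r ^ 2) (k + 1) :=
    sum_congr rfl fun i _ => by ring
  have hright : ∑ i ∈ range (k + 1), (r ^ (k - i)) ^ 2 = qNat (r ^ 2) (k + 1) :=
    (sum_range_reflect (fun i => (r ^ i) ^ 2) (k + 1)).trans hleft
  rw [hlhs, hleft, hright, ← sq] at hcs
  linear_combination hcs

end QNat

section QWallis

noncomputable def qWallisFactor (q : ℝ) (n : ℕ) : ℝ :=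
  qNat q (2 * n + 2) ^ 2 / (qNat q (2 * n + 1) * qNat q (2 * n + 3))

lemma prod_qWallisFactor_one (N : ℕ) : ∏ n ∈ range N, qWallisFactor 1 n = Wallis.W N := by
  refine prod_congr rfl fun n _ => ?_
  simp only [qWallisFactor, qNat_one_left]
  push_cast
  rw [div_mul_div_comm, sq]

variable {q : ℝ}

lemma one_le_qWallisFactor (hq : 0 ≤ q) (n : ℕ) : 1 ≤ qWallisFactor q n := by
  have hpos : 0 < qNat q (2 * n + 1) * qNat q (2 * n + 3) :=
    mul_pos (qNat_pos hq (by omega)) (qNat_pos hq (by omega))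
  rw [qWallisFactor, one_le_div hpos]
  linarith [qNat_succ_sq_sub_mul q (2 * n + 1), pow_nonneg hq (2 * n + 1)]

lemma qWallisFactor_le_qWallisFactor_one (hq : 0 ≤ q) (n : ℕ) :
    qWallisFactor q n ≤ qWallisFactor 1 n := by
  have hpos : 0 < qNat q (2 * n + 1) * qNat q (2 * n + 3) :=
    mul_pos (qNat_pos hq (by omega)) (qNat_pos hq (by omega))
  have hamgm : (2 * (n : ℝ) + 2) ^ 2 * q ^ (2 * n + 1) ≤ qNat q (2 * n + 2) ^ 2 := by
    have := sq_mul_pow_le_qNat_sq hq (2 * n + 1)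
    push_cast at this
    linarith
  have hid : qNat q (2 * n + 2) ^ 2 - qNat q (2 * n + 1) * qNat q (2 * n + 3) = q ^ (2 * n + 1) :=
    qNat_succ_sq_sub_mul q (2 * n + 1)
  simp only [qWallisFactor, qNat_one_left]
  rw [div_le_div_iff₀ hpos (by positivity)]
  push_cast
  linear_combination hamgm + (2 * (n : ℝ) + 2) ^ 2 * hid

lemma tendsto_prod_qWallisFactor_nhds_one (N : ℕ) :
    Tendsto (fun q => ∏ n ∈ range N, qWallisFactor q n) (𝓝 1) (𝓝 (Wallis.W N)) := by
  rw [← prod_qWallisFactor_one]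
  refine tendsto_finsetProd _ fun n _ => ?_
  have hne : qNat (1 : ℝ) (2 * n + 1) * qNat 1 (2 * n + 3) ≠ 0 :=
    (mul_pos (qNat_pos zero_le_one (by omega)) (qNat_pos zero_le_one (by omega))).ne'
  exact (((continuous_qNat _).pow 2).continuousAt.div
    ((continuous_qNat _).mul (continuous_qNat _)).continuousAt hne).tendsto

end QWallis

section Psi

variable {q : ℝ}

lemma psi_factor_eq_qNat_div (hq : q ≠ 1) (n : ℕ) :
    (1 - q ^ (2 * (n + 1))) / (1 - q ^ (2 * n + 1)) = qNat q (2 * n + 2) / qNat q (2 * n + 1) := by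
  rw [← one_sub_mul_qNat, ← one_sub_mul_qNat, mul_div_mul_left _ _ (sub_ne_zero.mpr hq.symm),
    mul_add_one]

lemma qNat_div_eq_one_add (hq : 0 ≤ q) (n : ℕ) :
    qNat q (2 * n + 2) / qNat q (2 * n + 1) = 1 + q ^ (2 * n + 1) / qNat q (2 * n + 1) := by
  rw [qNat_succ', add_div, div_self (qNat_pos hq (by omega)).ne']

lemma multipliable_qNat_div (hq₀ : 0 ≤ q) (hq₁ : q < 1) :
    Multipliable fun n => qNat q (2 * n + 2) / qNat q (2 * n + 1) := by
  simp only [qNat_div_eq_one_add hq₀]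
  refine Real.multipliable_one_add_of_summable <|
    (summable_geometric_of_lt_one hq₀ hq₁).of_nonneg_of_le
      (fun n => div_nonneg (pow_nonneg hq₀ _) (qNat_pos hq₀ (by omega)).le) fun n => ?_
  calc q ^ (2 * n + 1) / qNat q (2 * n + 1) ≤ q ^ (2 * n + 1) :=
        div_le_self (pow_nonneg hq₀ _) (one_le_qNat hq₀ (2 * n))
    _ ≤ q ^ n := pow_le_pow_of_le_one hq₀ hq₁.le (by omega)

lemma sq_prod_qNat_div (hq : 0 ≤ q) (N : ℕ) :
    (∏ n ∈ range N, qNat q (2 * n + 2) / qNat q (2 * n + 1)) ^ 2 =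
      qNat q (2 * N + 1) * ∏ n ∈ range N, qWallisFactor q n := by
  induction N with
  | zero => simp [qNat]
  | succ N ih =>
    have h₁ := (qNat_pos hq (k := 2 * N + 1) (by omega)).ne'
    have h₃ := (qNat_pos hq (k := 2 * N + 3) (by omega)).ne'
    rw [prod_range_succ, prod_range_succ, mul_pow, ih, qWallisFactor,
      show 2 * (N + 1) + 1 = 2 * N + 3 by ring]
    field_simp

lemma psi_eq_tprod_qNat_div (hq : q < 1) :
    psi q = ∏' n, qNat q (2 * n + 2) / qNat q (2 * n + 1) :=
  tprod_congr (psi_factor_eq_qNat_div hq.ne)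

lemma tendsto_prod_qWallisFactor_atTop (hq₀ : 0 ≤ q) (hq₁ : q < 1) :
    Tendsto (fun N => ∏ n ∈ range N, qWallisFactor q n) atTop (𝓝 ((1 - q) * psi q ^ 2)) := by
  have hpsi : Tendsto (fun N => ∏ n ∈ range N, qNat q (2 * n + 2) / qNat q (2 * n + 1)) atTop
      (𝓝 (psi q)) := by
    rw [psi_eq_tprod_qNat_div hq₁]
    exact (multipliable_qNat_div hq₀ hq₁).hasProd.tendsto_prod_nat
  have hpow : Tendsto (fun N : ℕ => q ^ (2 * N + 1)) atTop (𝓝 0) :=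
    (tendsto_pow_atTop_nhds_zero_of_lt_one hq₀ hq₁).comp
      (StrictMono.tendsto_atTop fun a b h => by omega)
  have hprod : ∀ N, ∏ n ∈ range N, qWallisFactor q n =
      (1 - q) * (∏ n ∈ range N, qNat q (2 * n + 2) / qNat q (2 * n + 1)) ^ 2 /
        (1 - q ^ (2 * N + 1)) := fun N => by
    have hne : 1 - q ^ (2 * N + 1) ≠ 0 := (sub_pos.mpr (pow_lt_one₀ hq₀ hq₁ (by omega))).ne'
    rw [sq_prod_qNat_div hq₀, ← mul_assoc, one_sub_mul_qNat, mul_div_cancel_left₀ _ hne]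
  have h := ((hpsi.pow 2).const_mul (1 - q)).div (tendsto_const_nhds.sub hpow)
    (by norm_num : (1 : ℝ) - 0 ≠ 0)
  rw [sub_zero, div_one] at h
  exact h.congr fun N => (hprod N).symm

lemma prod_qWallisFactor_le (hq₀ : 0 ≤ q) (hq₁ : q < 1) (N : ℕ) :
    ∏ n ∈ range N, qWallisFactor q n ≤ (1 - q) * psi q ^ 2 := by
  refine Monotone.ge_of_tendsto (monotone_nat_of_le_succ fun N => ?_)
    (tendsto_prod_qWallisFactor_atTop hq₀ hq₁) N
  rw [prod_range_succ]
  exact le_mul_of_one_le_right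
    (prod_nonneg fun n _ => zero_le_one.trans (one_le_qWallisFactor hq₀ n))
    (one_le_qWallisFactor hq₀ N)

lemma one_sub_mul_psi_sq_le_pi_div_two (hq₀ : 0 ≤ q) (hq₁ : q < 1) :
    (1 - q) * psi q ^ 2 ≤ π / 2 := by
  refine le_of_tendsto' (tendsto_prod_qWallisFactor_atTop hq₀ hq₁) fun N => ?_
  calc ∏ n ∈ range N, qWallisFactor q n ≤ ∏ n ∈ range N, qWallisFactor 1 n :=
        prod_le_prod (fun n _ => zero_le_one.trans (one_le_qWallisFactor hq₀ n))
          fun n _ => qWallisFactor_le_qWallisFactor_one hq₀ n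
    _ = Wallis.W N := prod_qWallisFactor_one N
    _ ≤ π / 2 := Wallis.W_le N

end Psi

theorem stmt16 :
    Filter.Tendsto (fun q : ℝ => (1 - q) * psi q ^ 2) (𝓝[<] (1 : ℝ)) (𝓝 (π / 2)) := by
  have hIoo : ∀ᶠ q in 𝓝[<] (1 : ℝ), q ∈ Set.Ioo 0 1 := Ioo_mem_nhdsLT one_pos
  refine tendsto_order.2 ⟨fun l hl => ?_, fun u hu => ?_⟩
  · obtain ⟨N, hN⟩ := (Wallis.tendsto_W_nhds_pi_div_two.eventually (lt_mem_nhds hl)).exists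
    have hW : Tendsto (fun q => ∏ n ∈ range N, qWallisFactor q n) (𝓝[<] 1) (𝓝 (Wallis.W N)) :=
      (tendsto_prod_qWallisFactor_nhds_one N).mono_left nhdsWithin_le_nhds
    filter_upwards [hW.eventually (lt_mem_nhds hN), hIoo] with q hlt hq
    exact hlt.trans_le (prod_qWallisFactor_le hq.1.le hq.2 N)
  · filter_upwards [hIoo] with q hq
    exact (one_sub_mul_psi_sq_le_pi_div_two hq.1.le hq.2).trans_lt hu
end

section
/- For every real z with |z| < 1/4, one has 1/cos(2πz) = exp( ∑_{k=1}^∞ (ζ^odd(2k)/k) (4z)^{2k} ), where the series on the right converges; equivalently, log cos(2πz) = − ∑_{k=1}^∞ (ζ^odd(2k)/k) (4z)^{2k}. -/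
/-!
Euler's product `cos (2πz) = ∏ₙ (1 - (4z)² / (2n+1)²)` follows from the sine product via
`cos t = sin 2t / (2 sin t)`. For `|z| < 1/4` every factor lies in `(0, 1]`, so taking logarithms
gives `log cos (2πz) = ∑ₙ log (1 - aₙ)` with `aₙ = (4z)² / (2n+1)²`. Expanding
`-log (1 - aₙ) = ∑ₖ aₙ^(k+1) / (k+1)` produces a double series of nonnegative terms, which may be
summed in the other order; summing over `n` first gives `ζ^odd(2k+2) (4z)^(2k+2) / (k+1)`.
-/

open Real Filter Finset Topology

theorem Finset.prod_range_two_mul {M : Type*} [CommMonoid M] (f : ℕ → M) (n : ℕ) :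
    ∏ j ∈ range (2 * n), f j = ∏ i ∈ range n, (f (2 * i) * f (2 * i + 1)) := by
  induction n with
  | zero => simp
  | succ n ih =>
    rw [Nat.mul_succ, prod_range_succ, prod_range_succ, prod_range_succ, ih, mul_assoc]

/-- The even-indexed factors of the sine product at `2x` are those of the sine product at `x`,
so the odd-indexed ones tend to `sin (2πx) / (2 sin (πx)) = cos (πx)`. -/
theorem Real.tendsto_euler_cos_prod {x : ℝ} (hx : sin (π * x) ≠ 0) :
    Tendsto (fun n : ℕ => ∏ i ∈ range n, (1 - (2 * x) ^ 2 / (2 * (i : ℝ) + 1) ^ 2))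
      atTop (𝓝 (cos (π * x))) := by
  set sinProd : ℝ → ℕ → ℝ := fun y n => π * y * ∏ j ∈ range n, (1 - y ^ 2 / ((j : ℝ) + 1) ^ 2)
  have hsplit : ∀ n, (∏ i ∈ range n, (1 - (2 * x) ^ 2 / (2 * (i : ℝ) + 1) ^ 2)) *
      (2 * sinProd x n) = sinProd (2 * x) (2 * n) := by
    intro n
    simp only [sinProd, prod_range_two_mul, prod_mul_distrib]
    have hfac : ∀ i : ℕ, 1 - (2 * x) ^ 2 / ((((2 * i + 1 : ℕ) : ℝ)) + 1) ^ 2 =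
        1 - x ^ 2 / ((i : ℝ) + 1) ^ 2 := fun i => by
      push_cast
      rw [show (2 * (i : ℝ) + 1 + 1) = 2 * ((i : ℝ) + 1) by ring, mul_pow, mul_pow,
        mul_div_mul_left _ _ (by norm_num)]
    simp only [hfac, Nat.cast_mul, Nat.cast_ofNat]
    ring
  have hlim : Tendsto (fun n => sinProd (2 * x) (2 * n) / (2 * sinProd x n)) atTop
      (𝓝 (sin (π * (2 * x)) / (2 * sin (π * x)))) :=
    (((tendsto_euler_sin_prod (2 * x)).comp (tendsto_id.const_mul_atTop' two_pos)).div
      ((tendsto_euler_sin_prod x).const_mul 2) (mul_ne_zero two_ne_zero hx))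
  have hne : ∀ᶠ n in atTop, 2 * sinProd x n ≠ 0 :=
    ((tendsto_euler_sin_prod x).const_mul 2).eventually_ne (mul_ne_zero two_ne_zero hx)
  have hval : sin (π * (2 * x)) / (2 * sin (π * x)) = cos (π * x) := by
    rw [show π * (2 * x) = 2 * (π * x) by ring, sin_two_mul]
    field_simp
  rw [← hval]
  refine hlim.congr' ?_
  filter_upwards [hne] with n hn
  rw [← hsplit n, mul_div_cancel_right₀ _ hn]

theorem Real.hasSum_log_of_tendsto_prod {f : ℕ → ℝ} {c : ℝ} (hpos : ∀ n, 0 < f n)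
    (hle : ∀ n, f n ≤ 1) (hc : 0 < c)
    (h : Tendsto (fun n => ∏ i ∈ range n, f i) atTop (𝓝 c)) :
    HasSum (fun n => log (f n)) (log c) := by
  have hlog : Tendsto (fun n => ∑ i ∈ range n, -log (f i)) atTop (𝓝 (-log c)) := by
    refine ((continuousAt_log hc.ne').tendsto.comp h).neg.congr fun n => ?_
    simp [log_prod fun i _ => (hpos i).ne']
  simpa using ((hasSum_iff_tendsto_nat_of_nonneg
    (fun n => neg_nonneg.mpr (log_nonpos (hpos n).le (hle n))) _).mpr hlog).neg

theorem sq_div_odd_sq_lt_one {x : ℝ} (hx : |x| < 1 / 2) (n : ℕ) :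
    (2 * x) ^ 2 / (2 * (n : ℝ) + 1) ^ 2 < 1 := by
  obtain ⟨hx₁, hx₂⟩ := abs_lt.mp hx
  rw [div_lt_one (by positivity)]
  nlinarith [(n.cast_nonneg : (0 : ℝ) ≤ n)]

theorem Real.hasSum_log_one_sub_sq_div_odd_sq {x : ℝ} (hx : |x| < 1 / 2) :
    HasSum (fun n : ℕ => log (1 - (2 * x) ^ 2 / (2 * (n : ℝ) + 1) ^ 2)) (log (cos (π * x))) := by
  rcases eq_or_ne x 0 with rfl | hx0
  · simp
  obtain ⟨hx₁, hx₂⟩ := abs_lt.mp hx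
  have hsin : sin (π * x) ≠ 0 := by
    rw [Ne, sin_eq_zero_iff_of_lt_of_lt (by nlinarith [pi_pos]) (by nlinarith [pi_pos])]
    exact mul_ne_zero pi_ne_zero hx0
  refine hasSum_log_of_tendsto_prod (fun n => sub_pos.mpr (sq_div_odd_sq_lt_one hx n))
    (fun n => sub_le_self _ (by positivity))
    (cos_pos_of_mem_Ioo ⟨by nlinarith [pi_pos], by nlinarith [pi_pos]⟩)
    (tendsto_euler_cos_prod hsin)

theorem HasSum.tsum_pow_div_of_log_one_sub {ι : Type*} {a : ι → ℝ} {L : ℝ}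
    (h0 : ∀ i, 0 ≤ a i) (h1 : ∀ i, a i < 1) (h : HasSum (fun i => log (1 - a i)) L) :
    HasSum (fun k : ℕ => (∑' i, a i ^ (k + 1)) / (k + 1)) (-L) := by
  set T : ι × ℕ → ℝ := fun p => a p.1 ^ (p.2 + 1) / (p.2 + 1)
  have hT0 : 0 ≤ T := fun p => by have := h0 p.1; positivity
  have hfib : ∀ i, HasSum (fun k => T (i, k)) (-log (1 - a i)) := fun i =>
    hasSum_pow_div_log_of_abs_lt_one (by rw [abs_of_nonneg (h0 i)]; exact h1 i)
  have hT : HasSum T (-L) := by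
    have hsum : Summable T := (summable_prod_of_nonneg hT0).mpr
      ⟨fun i => (hfib i).summable, h.neg.summable.congr fun i => ((hfib i).tsum_eq).symm⟩
    exact (hsum.hasSum.prod_fiberwise hfib).unique h.neg ▸ hsum.hasSum
  refine ((Equiv.prodComm ℕ ι).hasSum_iff.mpr hT).prod_fiberwise fun k => ?_
  rw [← tsum_div_const]
  exact (hT.summable.prod_symm.prod_factor k).hasSum

theorem stmt17 (z : ℝ) (hz : |z| < 1 / 4) :
    Summable (fun k : ℕ =>
      (∑' m : ℕ, 1 / ((2 * (m : ℝ) + 1)) ^ (2 * (k + 1))) / (k + 1) *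
        (4 * z) ^ (2 * (k + 1))) ∧
    1 / Real.cos (2 * π * z) =
      Real.exp (∑' k : ℕ,
        (∑' m : ℕ, 1 / ((2 * (m : ℝ) + 1)) ^ (2 * (k + 1))) / (k + 1) *
          (4 * z) ^ (2 * (k + 1))) ∧
    Real.log (Real.cos (2 * π * z)) =
      -∑' k : ℕ,
        (∑' m : ℕ, 1 / ((2 * (m : ℝ) + 1)) ^ (2 * (k + 1))) / (k + 1) *
          (4 * z) ^ (2 * (k + 1)) := by
  have h2z : |2 * z| < 1 / 2 := by rw [abs_mul, abs_two]; linarith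
  have hcos : 0 < cos (2 * π * z) := cos_pos_of_mem_Ioo
    ⟨by nlinarith [pi_pos, neg_abs_le z], by nlinarith [pi_pos, le_abs_self z]⟩
  have hS := (hasSum_log_one_sub_sq_div_odd_sq h2z).tsum_pow_div_of_log_one_sub
    (fun n => by positivity) (sq_div_odd_sq_lt_one h2z)
  have hterm : ∀ k : ℕ, (∑' n : ℕ, ((2 * (2 * z)) ^ 2 / (2 * (n : ℝ) + 1) ^ 2) ^ (k + 1)) / (k + 1)
      = (∑' m : ℕ, 1 / ((2 * (m : ℝ) + 1)) ^ (2 * (k + 1))) / (k + 1) * (4 * z) ^ (2 * (k + 1)) :=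
    fun k => by
      simp_rw [div_pow, ← pow_mul, div_eq_mul_one_div ((2 * (2 * z)) ^ _), tsum_mul_left]
      ring
  simp only [hterm, show π * (2 * z) = 2 * π * z by ring] at hS
  refine ⟨hS.summable, ?_, ?_⟩
  · rw [hS.tsum_eq, exp_neg, exp_log hcos, one_div]
  · rw [hS.tsum_eq, neg_neg]
end

section
/- For every positive integer k, the rescaled odd q-zeta value satisfies lim_{q→1⁻} (1−q)^{2k} ζ_q^odd(2k) = ζ^odd(2k), where ζ^odd(2k) = ∑_{m odd, m ≥ 1} m^{−2k}. -/
open scoped BigOperators Topology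

/-! Since `1 - q^m = (1 - q)(1 + q + ⋯ + q^(m-1))`, the rescaled `m`-th term equals
`q^(mk) / (1 + q + ⋯ + q^(m-1))^(2k)`, which is continuous at `q = 1` with value `m^(-2k)`.
For `m = 2n + 1` and `0 < q < 1` the geometric sum is at least `(n + 1) q^n`, so the terms are
dominated by the summable `(n + 1)^(-2k)` and Tannery's theorem passes the limit through the sum. -/

open Filter Finset

lemma one_sub_div_one_sub_pow {K : Type*} [Field K] {q : K} (hq : q ≠ 1) (m : ℕ) :
    (1 - q) / (1 - q ^ m) = (∑ i ∈ range m, q ^ i)⁻¹ := by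
  rw [← mul_neg_geom_sum, div_mul_cancel_left₀ (sub_ne_zero.2 hq.symm)]

lemma one_sub_pow_mul_div_one_sub_pow_eq {K : Type*} [Field K] {q : K} (hq : q ≠ 1) (k m : ℕ) :
    (1 - q) ^ (2 * k) * (q ^ (m * k) / (1 - q ^ m) ^ (2 * k)) =
      q ^ (m * k) * (∑ i ∈ range m, q ^ i)⁻¹ ^ (2 * k) := by
  rw [← one_sub_div_one_sub_pow hq, div_pow]
  ring

lemma tendsto_pow_mul_inv_geom_sum_pow {k m : ℕ} (hm : m ≠ 0) :
    Tendsto (fun q : ℝ => q ^ (m * k) * (∑ i ∈ range m, q ^ i)⁻¹ ^ (2 * k)) (𝓝 1)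
      (𝓝 (1 / (m : ℝ) ^ (2 * k))) := by
  have hcont : ContinuousAt (fun q : ℝ => q ^ (m * k) * (∑ i ∈ range m, q ^ i)⁻¹ ^ (2 * k)) 1 := by
    fun_prop (disch := simpa using hm)
  simpa using hcont.tendsto

lemma succ_mul_pow_le_geom_sum {q : ℝ} (hq0 : 0 ≤ q) (hq1 : q ≤ 1) {n m : ℕ} (hnm : n < m) :
    (n + 1 : ℝ) * q ^ n ≤ ∑ i ∈ range m, q ^ i :=
  calc (n + 1 : ℝ) * q ^ n = ∑ _i ∈ range (n + 1), q ^ n := by simp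
    _ ≤ ∑ i ∈ range (n + 1), q ^ i :=
      sum_le_sum fun i hi => pow_le_pow_of_le_one hq0 hq1 (Nat.lt_succ_iff.1 (mem_range.1 hi))
    _ ≤ ∑ i ∈ range m, q ^ i :=
      sum_le_sum_of_subset_of_nonneg (range_subset_range.2 hnm) fun i _ _ => pow_nonneg hq0 i

lemma pow_mul_inv_geom_sum_pow_le {q : ℝ} (hq0 : 0 ≤ q) (hq1 : q ≤ 1) (k n : ℕ) :
    q ^ ((2 * n + 1) * k) * (∑ i ∈ range (2 * n + 1), q ^ i)⁻¹ ^ (2 * k) ≤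
      1 / ((n : ℝ) + 1) ^ (2 * k) := by
  have hS : 0 < ∑ i ∈ range (2 * n + 1), q ^ i := by
    rw [sum_range_succ']
    positivity
  set S := ∑ i ∈ range (2 * n + 1), q ^ i
  have hpow : q ^ ((2 * n + 1) * k) ≤ (q ^ n) ^ (2 * k) := by
    rw [← pow_mul]
    exact pow_le_pow_of_le_one hq0 hq1 (by nlinarith)
  have hratio : q ^ n / S ≤ 1 / ((n : ℝ) + 1) := by
    rw [div_le_div_iff₀ hS (by positivity), one_mul, mul_comm]
    exact succ_mul_pow_le_geom_sum hq0 hq1 (by omega)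
  calc q ^ ((2 * n + 1) * k) * S⁻¹ ^ (2 * k) ≤ (q ^ n) ^ (2 * k) * S⁻¹ ^ (2 * k) := by gcongr
    _ = (q ^ n / S) ^ (2 * k) := by rw [div_eq_mul_inv, mul_pow]
    _ ≤ (1 / ((n : ℝ) + 1)) ^ (2 * k) := by gcongr
    _ = 1 / ((n : ℝ) + 1) ^ (2 * k) := by rw [one_div_pow]

theorem stmt18 (k : ℕ) (hk : 0 < k) :
    Filter.Tendsto (fun q : ℝ => (1 - q) ^ (2 * k) * qZetaOdd q k) (𝓝[<] (1 : ℝ))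
      (𝓝 (∑' m : ℕ, 1 / (2 * (m : ℝ) + 1) ^ (2 * k))) := by
  have hsummable : Summable fun n : ℕ => 1 / ((n : ℝ) + 1) ^ (2 * k) := by
    exact_mod_cast (summable_nat_add_iff 1).2 (Real.summable_one_div_nat_pow.2 (by omega))
  have hlimit (n : ℕ) : Tendsto
      (fun q : ℝ => q ^ ((2 * n + 1) * k) * (∑ i ∈ range (2 * n + 1), q ^ i)⁻¹ ^ (2 * k))
      (𝓝[<] 1) (𝓝 (1 / (2 * (n : ℝ) + 1) ^ (2 * k))) := by
    exact_mod_cast (tendsto_pow_mul_inv_geom_sum_pow (k := k) (by omega : 2 * n + 1 ≠ 0)).mono_left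
      nhdsWithin_le_nhds
  have hbound : ∀ᶠ q in 𝓝[<] (1 : ℝ), ∀ n : ℕ,
      ‖q ^ ((2 * n + 1) * k) * (∑ i ∈ range (2 * n + 1), q ^ i)⁻¹ ^ (2 * k)‖ ≤
        1 / ((n : ℝ) + 1) ^ (2 * k) := by
    filter_upwards [Ioo_mem_nhdsLT zero_lt_one] with q ⟨hq0, hq1⟩ n
    rw [Real.norm_of_nonneg (by positivity)]
    exact pow_mul_inv_geom_sum_pow_le hq0.le hq1.le k n
  refine (tendsto_tsum_of_dominated_convergence hsummable hlimit hbound).congr' ?_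
  filter_upwards [self_mem_nhdsWithin] with q (hq : q < 1)
  simp_rw [qZetaOdd, ← tsum_mul_left, one_sub_pow_mul_div_one_sub_pow_eq hq.ne]
end
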